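/- arXiv:1002.4676 — 5 statements merged into one kernel-verified Lean document; each statement's English description precedes it below -/
import Mathlib

section
/- For all h ≥ 1 and k ≥ 1, there exists a deterministic thrifty k-way branching program with exactly (k+1)^h states that solves the function tree evaluation problem FT^h_2(k). -/
/-! Framework: the tree evaluation problem and deterministic k-way branching programs.

The balanced binary tree of height `h` has nodes numbered heap-style `1, …, 2^h - 1`:
the root is node `1` and the children of node `i` are `2i` and `2i+1`.
Elements of `[k] = {1,…,k}` are represented by `Fin k` (the element `1 ∈ [k]`
corresponds to `(0 : Fin k)`). -/

/-- Node `i` is a leaf of the height-`h` balanced binary tree. -/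
def IsLeafNode (h i : ℕ) : Prop := 2 ^ (h - 1) ≤ i ∧ i < 2 ^ h

/-- Node `i` is an internal node of the height-`h` balanced binary tree. -/
def IsInternalNode (h i : ℕ) : Prop := 1 ≤ i ∧ i < 2 ^ (h - 1)

/-- An input to the height-`h` tree evaluation problem over `[k]`: a binary function on `[k]`
for each internal node and a value in `[k]` for each leaf (values at irrelevant indices
are ignored). -/
structure TEInput (h k : ℕ) where
  f : ℕ → Fin k → Fin k → Fin k
  leaf : ℕ → Fin k

/-- Auxiliary recursion (on fuel) computing node values. -/
def TEInput.valAux {h k : ℕ} (I : TEInput h k) : ℕ → ℕ → Fin k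
  | 0, i => I.leaf i
  | m + 1, i =>
      if 2 ^ (h - 1) ≤ i then I.leaf i
      else I.f i (I.valAux m (2 * i)) (I.valAux m (2 * i + 1))

/-- The value `v_i^I` of node `i`: the leaf value if `i` is a leaf, and
`f_i^I (v_{2i}^I, v_{2i+1}^I)` if `i` is an internal node. -/
def TEInput.val {h k : ℕ} (I : TEInput h k) (i : ℕ) : Fin k := I.valAux h i

/-- The input variables of the tree evaluation problem: one variable `f_i(a,b)` for each
internal node `i` and `a b ∈ [k]`, and one variable `l_i` for each leaf `i`. -/
inductive TEVar (h k : ℕ) where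
  | internal (i : ℕ) (hi : IsInternalNode h i) (a b : Fin k) : TEVar h k
  | leaf (i : ℕ) (hi : IsLeafNode h i) : TEVar h k

/-- The value of a variable under an input. -/
def TEInput.evalVar {h k : ℕ} (I : TEInput h k) : TEVar h k → Fin k
  | .internal i _ a b => I.f i a b
  | .leaf i _ => I.leaf i

/-- The node a variable belongs to. -/
def TEVar.node {h k : ℕ} : TEVar h k → ℕ
  | .internal i _ _ _ => i
  | .leaf i _ => i

/-- `X` is the thrifty `i` variable of input `I`: it is `f_i(v_{2i}^I, v_{2i+1}^I)`
if `i` is an internal node, and `l_i` if `i` is a leaf. -/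
def IsThriftyVarOf {h k : ℕ} (I : TEInput h k) (i : ℕ) : TEVar h k → Prop
  | .internal j _ a b => j = i ∧ a = I.val (2 * j) ∧ b = I.val (2 * j + 1)
  | .leaf j _ => j = i

/-- A deterministic `k`-way branching program with variables indexed by `V` and
output set `R`: a set of states (of cardinality `size`), a start state, each state
labeled either with a variable to query (non-output states, with `k` out-edges
labeled `1,…,k`) or with an output value (output sink states). -/
structure DetBP (V : Type) (k : ℕ) (R : Type) where
  size : ℕ
  start : Fin size
  label : Fin size → V ⊕ R
  next : Fin size → Fin k → Fin size

namespace DetBP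

variable {V : Type} {k : ℕ} {R : Type}

/-- One step of computation on input `x`: from a state querying variable `v`, follow
the out-edge labeled `x v`; output states are sinks. -/
def step (B : DetBP V k R) (x : V → Fin k) (s : Fin B.size) : Fin B.size :=
  match B.label s with
  | .inl v => B.next s (x v)
  | .inr _ => s

/-- The state of the computation path of `x` at time `t`. -/
def run (B : DetBP V k R) (x : V → Fin k) (t : ℕ) : Fin B.size :=
  (B.step x)^[t] B.start

/-- The depth of `B` is at most `D`: on every input, the computation path reaches an
output state within its first `D` states. -/
def DepthLE (B : DetBP V k R) (D : ℕ) : Prop :=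
  ∀ x : V → Fin k, ∃ t < D, (B.label (B.run x t)).isRight = true

/-- `B` solves the function tree evaluation problem `FT^h_2(k)`: on every input `I`, the
computation path ends in the output state labeled with the root value `v_1^I`. -/
def SolvesFT {h : ℕ} (B : DetBP (TEVar h k) k (Fin k)) : Prop :=
  ∀ I : TEInput h k, ∃ t, B.label (B.run I.evalVar t) = Sum.inr (I.val 1)

/-- `B` solves the decision tree evaluation problem `BT^h_2(k)`: on every input `I`, the
computation path ends in the output state labeled with whether `v_1^I = 1`
(the element `1 ∈ [k]` being `(0 : Fin k)`). -/
def SolvesBT {h : ℕ} (B : DetBP (TEVar h k) k Bool) : Prop :=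
  ∀ I : TEInput h k, ∃ t, B.label (B.run I.evalVar t) = Sum.inr (decide ((I.val 1 : Fin k).val = 0))

/-- `B` is thrifty: on every input `I`, every query `f_i(a,b)` made along the computation
path of `I` satisfies `a = v_{2i}^I` and `b = v_{2i+1}^I`. -/
def Thrifty {h : ℕ} (B : DetBP (TEVar h k) k R) : Prop :=
  ∀ (I : TEInput h k) (t i : ℕ) (hi : IsInternalNode h i) (a b : Fin k),
    B.label (B.run I.evalVar t) = Sum.inl (TEVar.internal i hi a b) →
    a = I.val (2 * i) ∧ b = I.val (2 * i + 1)

end DetBP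

/-! The program performs a depth-first traversal of the tree. A state is a register together with
one slot per level below the root, describing the path from the root to the current node: an
empty slot means the path goes left at that level, a full slot means it goes right and holds the
already computed value of the left sibling. With an empty register the path leads to a leaf,
which is queried. With a full register holding the value `b` of the node just computed, the
deepest full slot, holding `a`, is the left sibling of that node, so their parent `i` is queried
at `f_i(a, b)`, which is exactly the thrifty query. Hence `(k+1)^(h-1) · (k+1)` states suffice. -/

namespace TEInput

variable {h k : ℕ} (I : TEInput h k)

theorem valAux_eq_leaf (n : ℕ) {i : ℕ} (hi : 2 ^ (h - 1) ≤ i) : I.valAux n i = I.leaf i := by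
  cases n <;> simp [valAux, hi]

theorem valAux_add (a n : ℕ) {i : ℕ} (hi : 2 ^ (h - 1) ≤ i * 2 ^ a) :
    I.valAux (a + n) i = I.valAux a i := by
  induction a generalizing i with
  | zero => simp_all [valAux_eq_leaf]
  | succ a ih =>
    by_cases hleaf : 2 ^ (h - 1) ≤ i
    · simp [valAux_eq_leaf, hleaf]
    · rw [add_right_comm]
      simp only [valAux, if_neg hleaf]
      rw [ih, ih] <;> rw [pow_succ] at hi <;> nlinarith

theorem val_eq_leaf {i : ℕ} (hi : 2 ^ (h - 1) ≤ i) : I.val i = I.leaf i :=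
  I.valAux_eq_leaf h hi

theorem val_eq_f {i : ℕ} (hi : IsInternalNode h i) :
    I.val i = I.f i (I.val (2 * i)) (I.val (2 * i + 1)) := by
  obtain ⟨hi₁, hi₂⟩ := hi
  obtain _ | n := h
  · simp at hi₂
    omega
  have hchild (j : ℕ) (hj : 2 * i ≤ j) : I.valAux (n + 1) j = I.valAux n j :=
    I.valAux_add n 1 (by simpa using Nat.le_mul_of_pos_left (2 ^ n) (by omega : 0 < j))
  rw [val, val, val, hchild (2 * i) le_rfl, hchild (2 * i + 1) (by omega), valAux,
    if_neg (by simpa using hi₂)]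

end TEInput

def IsThriftyLabel {h k : ℕ} {R : Type} (I : TEInput h k) (q : TEVar h k ⊕ R) : Prop :=
  ∀ (i : ℕ) (hi : IsInternalNode h i) (a b : Fin k),
    q = Sum.inl (TEVar.internal i hi a b) → a = I.val (2 * i) ∧ b = I.val (2 * i + 1)

namespace DetBP

variable {V R σ : Type} {k n : ℕ}

def stepOf (label : σ → V ⊕ R) (next : σ → Fin k → σ) (x : V → Fin k) (s : σ) : σ :=
  match label s with
  | .inl v => next s (x v)
  | .inr _ => s

def ofEquiv (e : σ ≃ Fin n) (start : σ) (label : σ → V ⊕ R) (next : σ → Fin k → σ) :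
    DetBP V k R where
  size := n
  start := e start
  label s := label (e.symm s)
  next s a := e (next (e.symm s) a)

theorem ofEquiv_run (e : σ ≃ Fin n) (start : σ) (label : σ → V ⊕ R) (next : σ → Fin k → σ)
    (x : V → Fin k) (t : ℕ) :
    (ofEquiv e start label next).run x t = e ((stepOf label next x)^[t] start) := by
  induction t with
  | zero => rfl
  | succ t ih =>
    simp only [run, Function.iterate_succ_apply'] at ih ⊢
    rw [ih]
    simp only [step, stepOf, ofEquiv, Equiv.symm_apply_apply]
    split <;> rfl

theorem ofEquiv_label_run (e : σ ≃ Fin n) (start : σ) (label : σ → V ⊕ R)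
    (next : σ → Fin k → σ) (x : V → Fin k) (t : ℕ) :
    (ofEquiv e start label next).label ((ofEquiv e start label next).run x t) =
      label ((stepOf label next x)^[t] start) := by
  rw [ofEquiv_run]
  exact congrArg label (e.symm_apply_apply _)

end DetBP

theorem Relation.ReflTransGen.exists_iterate {α : Type*} {f : α → α} {p : α → Prop} {a b : α}
    (hab : ReflTransGen (fun x y => p x ∧ f x = y) a b) :
    ∃ n, f^[n] a = b ∧ ∀ t < n, p (f^[t] a) := by
  induction hab using Relation.ReflTransGen.head_induction_on with
  | refl => exact ⟨0, rfl, by simp⟩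
  | head hac _ ih =>
    obtain ⟨hpa, rfl⟩ := hac
    obtain ⟨n, hn, hp⟩ := ih
    refine ⟨n + 1, hn, fun t ht => ?_⟩
    cases t with
    | zero => exact hpa
    | succ t => exact hp t (by omega)

namespace ThriftyFT

variable {m k : ℕ}

/-- The node reached from the root by a path listed deepest level first. -/
def node {α : Type*} : List (Option α) → ℕ
  | [] => 1
  | none :: s => 2 * node s
  | some _ :: s => 2 * node s + 1

theorem node_bounds {α : Type*} (s : List (Option α)) :
    2 ^ s.length ≤ node s ∧ node s < 2 ^ (s.length + 1) := by
  induction s with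
  | nil => simp [node]
  | cons o s ih => cases o <;> simp only [node, List.length_cons, pow_succ] <;> omega

theorem isLeafNode_node {s : List (Option (Fin k))} (hs : s.length = m) :
    IsLeafNode (m + 1) (node s) := by
  simpa [IsLeafNode, hs] using node_bounds s

theorem isInternalNode_node {s : List (Option (Fin k))} (hs : s.length < m) :
    IsInternalNode (m + 1) (node s) := by
  obtain ⟨h₁, h₂⟩ := node_bounds s
  exact ⟨le_trans Nat.one_le_two_pow h₁,
    lt_of_lt_of_le h₂ (Nat.pow_le_pow_right two_pos hs)⟩

abbrev State (m k : ℕ) := List.Vector (Option (Fin k)) m × Option (Fin k)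

theorem card_state : Fintype.card (State m k) = (k + 1) ^ (m + 1) := by
  simp [card_vector, pow_succ]

/-- Left padding with empty slots; the truncated subtraction only matters for `m < s.length`. -/
def pad (m : ℕ) (s : List (Option (Fin k))) : List.Vector (Option (Fin k)) m :=
  ⟨(List.replicate m none ++ s).drop s.length, by simp⟩

theorem toList_pad {s : List (Option (Fin k))} (hs : s.length ≤ m) :
    (pad m s).toList = List.replicate (m - s.length) none ++ s := by
  simp [pad, List.drop_append, hs]

theorem pad_cons_none {s : List (Option (Fin k))} (hs : s.length < m) :
    pad m (none :: s) = pad m s := by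
  apply List.Vector.toList_injective
  rw [toList_pad (s := none :: s) hs, toList_pad hs.le, List.length_cons,
    show m - s.length = m - (s.length + 1) + 1 by omega, List.replicate_succ', List.append_assoc]
  rfl

theorem dropWhile_pad_cons_some {s : List (Option (Fin k))} {a : Fin k} (hs : s.length < m) :
    (pad m (some a :: s)).toList.dropWhile Option.isNone = some a :: s := by
  simp [toList_pad (s := some a :: s) hs]

/-- The state after the value `v` of `node s` has been computed. -/
def exit (m : ℕ) : List (Option (Fin k)) → Fin k → State m k
  | [], v => (pad m [], some v)
  | none :: s, v => (pad m (some v :: s), none)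
  | some a :: s, v => (pad m (some a :: s), some v)

def label (w : State m k) : TEVar (m + 1) k ⊕ Fin k :=
  match w.2, w.1.toList.dropWhile Option.isNone with
  | none, _ => .inl (.leaf (node w.1.toList) (isLeafNode_node w.1.toList_length))
  | some b, some a :: s =>
    -- the `else` branch is unreachable, since `s` is a proper suffix of `w.1.toList`
    if hs : s.length < m then .inl (.internal (node s) (isInternalNode_node hs) a b) else .inr b
  | some b, _ => .inr b

def next (w : State m k) (v : Fin k) : State m k :=
  match w.2, w.1.toList.dropWhile Option.isNone with
  | none, _ => exit m w.1.toList v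
  | some _, some _ :: s => exit m s v
  | some _, _ => w

noncomputable def treeBP (m k : ℕ) : DetBP (TEVar (m + 1) k) k (Fin k) :=
  DetBP.ofEquiv (Fintype.equivFinOfCardEq card_state) (pad m [], none) label next

variable (I : TEInput (m + 1) k)

def ThriftyStep (w w' : State m k) : Prop :=
  IsThriftyLabel I (label w) ∧ DetBP.stepOf label next I.evalVar w = w'

theorem thriftyStep_leaf {s : List (Option (Fin k))} (hs : s.length = m) :
    ThriftyStep I (pad m s, none) (exit m s (I.val (node s))) := by
  have hpad : (pad m s).toList = s := by simp [toList_pad hs.le, hs]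
  refine ⟨fun i hi a b hq => by simp [label] at hq, ?_⟩
  simp only [DetBP.stepOf, label, next, TEInput.evalVar, hpad]
  rw [I.val_eq_leaf (by simpa [hs] using (node_bounds s).1)]

theorem thriftyStep_internal {s : List (Option (Fin k))} (hs : s.length < m) :
    ThriftyStep I (pad m (some (I.val (2 * node s)) :: s), some (I.val (2 * node s + 1)))
      (exit m s (I.val (node s))) := by
  have hq : label (pad m (some (I.val (2 * node s)) :: s), some (I.val (2 * node s + 1))) =
      .inl (.internal (node s) (isInternalNode_node hs) (I.val (2 * node s))
        (I.val (2 * node s + 1))) := by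
    simp [label, dropWhile_pad_cons_some hs, hs]
  refine ⟨fun i hi a b h => ?_, ?_⟩
  · rw [hq] at h
    simp only [Sum.inl.injEq, TEVar.internal.injEq] at h
    obtain ⟨rfl, rfl, rfl⟩ := h
    exact ⟨rfl, rfl⟩
  · simp only [DetBP.stepOf, hq, next, dropWhile_pad_cons_some hs, TEInput.evalVar]
    rw [I.val_eq_f (isInternalNode_node hs)]

/-- Started at the leftmost leaf below `node s`, the program computes the value of `node s`
thriftily. -/
theorem traverse (s : List (Option (Fin k))) (hs : s.length ≤ m) :
    Relation.ReflTransGen (ThriftyStep I) (pad m s, none) (exit m s (I.val (node s))) := by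
  rcases hs.lt_or_eq with hs | hs
  · have hleft := traverse (none :: s) hs
    have hright := traverse (some (I.val (2 * node s)) :: s) hs
    rw [pad_cons_none hs] at hleft
    exact (hleft.trans hright).tail (thriftyStep_internal I hs)
  · exact .single (thriftyStep_leaf I hs)
termination_by m - s.length

theorem label_exit_nil (v : Fin k) : label (exit m [] v) = .inr v := by
  simp [exit, label, toList_pad]

theorem treeBP_solvesFT : (treeBP m k).SolvesFT := fun I => by
  obtain ⟨n, hn, -⟩ := (traverse I [] (Nat.zero_le m)).exists_iterate
  exact ⟨n, by rw [treeBP, DetBP.ofEquiv_label_run, hn, label_exit_nil]; rfl⟩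

theorem treeBP_thrifty : (treeBP m k).Thrifty := by
  intro I t
  obtain ⟨n, hn, hthrifty⟩ := (traverse I [] (Nat.zero_le m)).exists_iterate
  rw [treeBP, DetBP.ofEquiv_label_run]
  rcases lt_or_ge t n with ht | ht
  · exact hthrifty t ht
  · have hfix (v : Fin k) : DetBP.stepOf label next I.evalVar (exit m [] v) = exit m [] v := by
      simp [DetBP.stepOf, label_exit_nil]
    rw [← Nat.sub_add_cancel ht, Function.iterate_add_apply, hn, Function.iterate_fixed (hfix _)]
    simp [label_exit_nil]

end ThriftyFT

theorem stmt_0_general (h k : ℕ) (hh : 1 ≤ h) :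
    ∃ B : DetBP (TEVar h k) k (Fin k),
      B.size = (k + 1) ^ h ∧ B.SolvesFT ∧ B.Thrifty := by
  obtain ⟨m, rfl⟩ : ∃ m, h = m + 1 := ⟨h - 1, by omega⟩
  exact ⟨ThriftyFT.treeBP m k, rfl, ThriftyFT.treeBP_solvesFT, ThriftyFT.treeBP_thrifty⟩

/-- For all `h ≥ 1` and `k ≥ 1`, there exists a deterministic thrifty `k`-way
branching program with exactly `(k+1)^h` states that solves `FT^h_2(k)`. -/
theorem stmt_0 (h k : ℕ) (hh : 1 ≤ h) (hk : 1 ≤ k) :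
    ∃ B : DetBP (TEVar h k) k (Fin k),
      B.size = (k + 1) ^ h ∧ B.SolvesFT ∧ B.Thrifty :=
  stmt_0_general h k hh
end

section
/- For all k ≥ 2, every deterministic k-way branching program solving the function tree evaluation problem FT^2_2(k) (height 2) has at least (k+1)^2 states. -/
/-! The `k²` states querying `f₁(a,b)` and the `k` output states are forced because each of
these labels must occur on some computation path. For the leaf-query states, restrict to the
inputs with root function `+`; they differ only in the leaves `l₂ = a`, `l₃ = b`. Sending an
input to the state of its last leaf query together with the answer read there is injective:
from that point on the run is the same for all these inputs, so the output `a + b` is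
determined, and with one leaf value it recovers the other. Every input reads both leaves, so
the state and answer of its first leaf query lie outside the image of this map. Hence
`k² < k · #(leaf-query states)`. -/

namespace DetBP

variable {V : Type} {k : ℕ} {R : Type} (B : DetBP V k R)

lemma step_of_label_inl {x : V → Fin k} {s : Fin B.size} {v : V} (h : B.label s = .inl v) :
    B.step x s = B.next s (x v) := by
  rw [step, h]

lemma step_of_label_inr {x : V → Fin k} {s : Fin B.size} {r : R} (h : B.label s = .inr r) :
    B.step x s = s := by
  rw [step, h]

lemma step_congr {x y : V → Fin k} {s : Fin B.size}
    (h : ∀ v, B.label s = .inl v → x v = y v) : B.step x s = B.step y s := by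
  cases hs : B.label s with
  | inl v => rw [B.step_of_label_inl hs, B.step_of_label_inl hs, h v hs]
  | inr r => rw [B.step_of_label_inr hs, B.step_of_label_inr hs]

lemma run_succ (x : V → Fin k) (t : ℕ) : B.run x (t + 1) = B.step x (B.run x t) :=
  Function.iterate_succ_apply' _ _ _

lemma run_eq_of_le {x : V → Fin k} {T u : ℕ} {r : R} (hT : B.label (B.run x T) = .inr r)
    (hu : T ≤ u) : B.run x u = B.run x T := by
  induction u, hu using Nat.le_induction with
  | base => rfl
  | succ u _ ih => rw [run_succ, ih, B.step_of_label_inr hT]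

lemma label_run_of_le {x : V → Fin k} {T u : ℕ} {r : R} (hT : B.label (B.run x T) = .inr r)
    (hu : T ≤ u) : B.label (B.run x u) = .inr r := by
  rw [B.run_eq_of_le hT hu, hT]

lemma output_eq_of_run_add_eq {x y : V → Fin k} {t t' T T' : ℕ} {r r' : R}
    (hx : B.label (B.run x T) = .inr r) (hy : B.label (B.run y T') = .inr r')
    (h : ∀ u, B.run x (t + u) = B.run y (t' + u)) : r = r' := by
  have hr := B.label_run_of_le hx (u := t + (T + T')) (by omega)
  rw [h, B.label_run_of_le hy (by omega)] at hr
  exact (Sum.inr_injective hr).symm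

lemma run_add_eq_of_agree {x y : V → Fin k} {t t' : ℕ} (hs : B.run x t = B.run y t')
    (h : ∀ u v, B.label (B.run y (t' + u)) = .inl v → x v = y v) (u : ℕ) :
    B.run x (t + u) = B.run y (t' + u) := by
  induction u with
  | zero => exact hs
  | succ u ih => rw [← add_assoc, ← add_assoc, run_succ, run_succ, ih, B.step_congr (h u)]

lemma exists_query_of_output_ne {x y : V → Fin k} {v : V} {T T' : ℕ} {r r' : R}
    (hx : B.label (B.run x T) = .inr r) (hy : B.label (B.run y T') = .inr r') (hne : r ≠ r')
    (hagree : ∀ w, w ≠ v → x w = y w) : ∃ t, B.label (B.run x t) = .inl v := by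
  by_contra! hq
  refine hne (B.output_eq_of_run_add_eq hx hy (t := 0) (t' := 0) fun u => ?_)
  exact (B.run_add_eq_of_agree (x := y) (y := x) rfl
    (fun u w hw => (hagree w (by rintro rfl; exact hq _ hw)).symm) u).symm

section QueriesIn

variable (W : Set V)

def QueriesIn (s : Fin B.size) : Prop := ∃ w ∈ W, B.label s = .inl w

variable {B W}

lemma exists_last_queriesIn {x : V → Fin k} {T t : ℕ} {r : R}
    (hT : B.label (B.run x T) = .inr r) (ht : B.QueriesIn W (B.run x t)) :
    ∃ τ, B.QueriesIn W (B.run x τ) ∧ ∀ u, τ < u → ¬ B.QueriesIn W (B.run x u) := by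
  classical
  have hle (u : ℕ) (hu : B.QueriesIn W (B.run x u)) : u ≤ T := by
    by_contra! hTu
    obtain ⟨w, -, hw⟩ := hu
    rw [B.label_run_of_le hT hTu.le] at hw
    cases hw
  let P (u : ℕ) : Prop := B.QueriesIn W (B.run x u)
  exact ⟨Nat.findGreatest P T, Nat.findGreatest_spec (P := P) (hle t ht) ht,
    fun u hu hQ => Nat.findGreatest_is_greatest hu (hle u hQ) hQ⟩

lemma run_add_eq_of_last_queriesIn {x y : V → Fin k} {t τ : ℕ} {w : V}
    (hagree : ∀ v ∉ W, x v = y v) (hs : B.run x t = B.run y τ)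
    (hw : B.label (B.run y τ) = .inl w) (hans : x w = y w)
    (hlast : ∀ u, τ < u → ¬ B.QueriesIn W (B.run y u)) (u : ℕ) :
    B.run x (t + u) = B.run y (τ + u) := by
  refine B.run_add_eq_of_agree hs (fun u v hv => ?_) u
  rcases u.eq_zero_or_pos with rfl | hu
  · rw [add_zero, hw, Sum.inl.injEq] at hv
    exact hv ▸ hans
  · exact hagree v fun hvW => hlast (τ + u) (by omega) ⟨v, hvW, hv⟩

variable (B W)

theorem card_lt_card_queriesIn_mul {ι : Type*} [Finite ι] [Nonempty ι]
    (x : ι → V → Fin k) (o : ι → R)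
    (hagree : ∀ i j, ∀ v ∉ W, x i v = x j v)
    (hout : ∀ i, ∃ T, B.label (B.run (x i) T) = .inr (o i))
    (hdet : ∀ i j, ∀ w ∈ W, o i = o j → x i w = x j w → i = j)
    (htwice : ∀ i, ∃ t₀ t₁, t₀ < t₁ ∧ B.QueriesIn W (B.run (x i) t₀) ∧
      B.QueriesIn W (B.run (x i) t₁)) :
    Nat.card ι < Nat.card {s // B.QueriesIn W s} * k := by
  classical
  have := Fintype.ofFinite ι
  choose T hT using hout
  choose t₀ t₁ hlt hq₀ hq₁ using htwice
  choose τ hτ hτlast using fun i => exists_last_queriesIn (hT i) (hq₁ i)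
  choose w hwW hw using hτ
  have follow (i j : ι) (t : ℕ) (v : V) (hs : B.run (x i) t = B.run (x j) (τ j))
      (hv : B.label (B.run (x i) t) = .inl v) (hans : x i v = x j (w j)) (u : ℕ) :
      B.run (x i) (t + u) = B.run (x j) (τ j + u) := by
    rw [hs, hw j, Sum.inl.injEq] at hv
    exact run_add_eq_of_last_queriesIn (hagree i j) hs (hw j) (hv ▸ hans) (hτlast j) u
  let κ (i : ι) : {s // B.QueriesIn W s} × Fin k :=
    (⟨B.run (x i) (τ i), w i, hwW i, hw i⟩, x i (w i))
  have hκ : Function.Injective κ := by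
    intro i j hij
    obtain ⟨hs, hans⟩ := Prod.ext_iff.mp hij
    replace hs : B.run (x i) (τ i) = B.run (x j) (τ j) := congrArg Subtype.val hs
    replace hans : x i (w i) = x j (w j) := hans
    have ho : o i = o j := B.output_eq_of_run_add_eq (hT i) (hT j) (follow i j _ _ hs (hw i) hans)
    have hwj : w i = w j := by
      have hi := hw i
      rwa [hs, hw j, Sum.inl.injEq, eq_comm] at hi
    exact hdet i j (w j) (hwW j) ho (hwj ▸ hans)
  let i₀ : ι := Classical.arbitrary ι
  obtain ⟨v₀, hv₀W, hv₀⟩ := hq₀ i₀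
  have hnot : (⟨B.run (x i₀) (t₀ i₀), v₀, hv₀W, hv₀⟩, x i₀ v₀) ∉ Set.range κ := by
    rintro ⟨j, hj⟩
    obtain ⟨hs, hans⟩ := Prod.ext_iff.mp hj
    have hfollow := follow i₀ j (t₀ i₀) v₀ (congrArg Subtype.val hs).symm hv₀ hans.symm
      (t₁ i₀ - t₀ i₀)
    rw [Nat.add_sub_cancel' (hlt i₀).le] at hfollow
    exact hτlast j _ (by have := hlt i₀; omega) (hfollow ▸ hq₁ i₀)
  simpa only [Nat.card_eq_fintype_card, Fintype.card_prod, Fintype.card_fin] using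
    Fintype.card_lt_of_injective_of_notMem κ hκ hnot

lemma card_add_card_queriesIn_le {α : Type*} [Finite α] (f : α → Fin B.size)
    (hf : Function.Injective (B.label ∘ f)) (hW : ∀ a, ¬ B.QueriesIn W (f a)) :
    Nat.card α + Nat.card {s // B.QueriesIn W s} ≤ B.size := by
  have := Nat.card_le_card_of_injective (Sum.elim f Subtype.val)
    (hf.of_comp.sumElim Subtype.val_injective fun a s h => hW a (h ▸ s.2))
  rwa [Nat.card_sum, Nat.card_fin] at this

end QueriesIn

end DetBP

def TEVar.IsLeaf {h k : ℕ} : TEVar h k → Prop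
  | .internal .. => False
  | .leaf .. => True

lemma isInternalNode_two_iff {i : ℕ} : IsInternalNode 2 i ↔ i = 1 := by
  simp only [IsInternalNode]; omega

lemma isLeafNode_two_iff {i : ℕ} : IsLeafNode 2 i ↔ i = 2 ∨ i = 3 := by
  simp only [IsLeafNode]; omega

namespace TEInput

variable {k : ℕ}

def ofRoot (g : Fin k → Fin k → Fin k) (a b : Fin k) : TEInput 2 k :=
  ⟨fun _ => g, fun j => if j = 2 then a else b⟩

lemma val_one_ofRoot (g : Fin k → Fin k → Fin k) (a b : Fin k) :
    (ofRoot g a b).val 1 = g a b := by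
  simp [ofRoot, val, valAux]

end TEInput

namespace DetBP.SolvesFT

open TEInput

variable {k : ℕ}

lemma exists_query {h : ℕ} {B : DetBP (TEVar h k) k (Fin k)} (hB : B.SolvesFT)
    {I J : TEInput h k} {v : TEVar h k} (hagree : ∀ w, w ≠ v → I.evalVar w = J.evalVar w)
    (hval : I.val 1 ≠ J.val 1) : ∃ t, B.label (B.run I.evalVar t) = .inl v := by
  obtain ⟨T, hT⟩ := hB I
  obtain ⟨T', hT'⟩ := hB J
  exact B.exists_query_of_output_ne hT hT' hval hagree

variable {B : DetBP (TEVar 2 k) k (Fin k)}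

lemma exists_output (hB : B.SolvesFT) (r : Fin k) : ∃ s, B.label s = .inr r := by
  obtain ⟨t, ht⟩ := hB (ofRoot (fun _ _ => r) r r)
  exact ⟨_, by rwa [val_one_ofRoot] at ht⟩

variable [Nontrivial (Fin k)]

lemma exists_query_internal (hB : B.SolvesFT) (a b : Fin k) :
    ∃ t, B.label (B.run (ofRoot (· + ·) a b).evalVar t) =
      .inl (.internal 1 (isInternalNode_two_iff.mpr rfl) a b) := by
  obtain ⟨c, hc⟩ := exists_ne (a + b)
  refine hB.exists_query (J := ofRoot (fun p q => if p = a ∧ q = b then c else p + q) a b)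
    ?_ (by simpa [val_one_ofRoot] using hc.symm)
  rintro (⟨j, hj, p, q⟩ | ⟨j, hj⟩) hne
  · obtain rfl := isInternalNode_two_iff.mp hj
    have hpq : ¬(p = a ∧ q = b) := by
      rintro ⟨rfl, rfl⟩
      exact hne rfl
    simp [evalVar, ofRoot, hpq]
  · rfl

lemma exists_query_leaf (hB : B.SolvesFT) (a b : Fin k) {j : ℕ} (hj : IsLeafNode 2 j) :
    ∃ t, B.label (B.run (ofRoot (· + ·) a b).evalVar t) = .inl (.leaf j hj) := by
  rcases isLeafNode_two_iff.mp hj with rfl | rfl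
  · obtain ⟨a', ha'⟩ := exists_ne a
    refine hB.exists_query (J := ofRoot (· + ·) a' b) ?_ ?_
    · rintro (_ | ⟨j', hj'⟩) hne
      · rfl
      · rcases isLeafNode_two_iff.mp hj' with rfl | rfl
        · exact absurd rfl hne
        · rfl
    · rw [val_one_ofRoot, val_one_ofRoot]
      exact fun h => ha' (add_right_cancel h).symm
  · obtain ⟨b', hb'⟩ := exists_ne b
    refine hB.exists_query (J := ofRoot (· + ·) a b') ?_ ?_
    · rintro (_ | ⟨j', hj'⟩) hne
      · rfl
      · rcases isLeafNode_two_iff.mp hj' with rfl | rfl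
        · rfl
        · exact absurd rfl hne
    · rw [val_one_ofRoot, val_one_ofRoot]
      exact fun h => hb' (add_left_cancel h).symm

lemma lt_card_queriesIn_isLeaf (hB : B.SolvesFT) :
    k < Nat.card {s // B.QueriesIn {v | v.IsLeaf} s} := by
  have hL₂ : IsLeafNode 2 2 := isLeafNode_two_iff.mpr (.inl rfl)
  have hL₃ : IsLeafNode 2 3 := isLeafNode_two_iff.mpr (.inr rfl)
  have key := B.card_lt_card_queriesIn_mul {v | v.IsLeaf}
    (fun p : Fin k × Fin k => (ofRoot (· + ·) p.1 p.2).evalVar) (fun p => p.1 + p.2) ?_ ?_ ?_ ?_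
  · rw [Nat.card_prod, Nat.card_fin] at key
    exact Nat.lt_of_mul_lt_mul_right key
  · rintro p q (_ | _) hv
    · rfl
    · exact absurd trivial hv
  · intro p
    simpa [val_one_ofRoot] using hB (ofRoot (· + ·) p.1 p.2)
  · rintro ⟨a, b⟩ ⟨a', b'⟩ (_ | ⟨j, hj⟩) hw ho hans
    · exact hw.elim
    rcases isLeafNode_two_iff.mp hj with rfl | rfl
    · change a = a' at hans
      subst hans
      dsimp only at ho
      rw [add_left_cancel ho]
    · change b = b' at hans
      subst hans
      dsimp only at ho
      rw [add_right_cancel ho]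
  · intro p
    obtain ⟨t₂, ht₂⟩ := hB.exists_query_leaf p.1 p.2 hL₂
    obtain ⟨t₃, ht₃⟩ := hB.exists_query_leaf p.1 p.2 hL₃
    have hq₂ : B.QueriesIn {v | v.IsLeaf} _ := ⟨.leaf 2 hL₂, trivial, ht₂⟩
    have hq₃ : B.QueriesIn {v | v.IsLeaf} _ := ⟨.leaf 3 hL₃, trivial, ht₃⟩
    have hne : t₂ ≠ t₃ := by
      rintro rfl
      rw [ht₂] at ht₃
      cases ht₃
    rcases hne.lt_or_gt with h | h
    · exact ⟨t₂, t₃, h, hq₂, hq₃⟩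
    · exact ⟨t₃, t₂, h, hq₃, hq₂⟩

end DetBP.SolvesFT

/-- For all `k ≥ 2`, every deterministic `k`-way branching program solving
`FT^2_2(k)` has at least `(k+1)^2` states. -/
theorem stmt_1 (k : ℕ) (hk : 2 ≤ k) (B : DetBP (TEVar 2 k) k (Fin k))
    (hB : B.SolvesFT) : (k + 1) ^ 2 ≤ B.size := by
  have : Nontrivial (Fin k) := Fin.nontrivial_iff_two_le.mpr hk
  choose tF hF using fun p : Fin k × Fin k => hB.exists_query_internal p.1 p.2
  choose O hO using hB.exists_output
  let f : Fin k × Fin k ⊕ Fin k → Fin B.size :=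
    Sum.elim (fun p => B.run (TEInput.ofRoot (· + ·) p.1 p.2).evalVar (tF p)) O
  have hf : Function.Injective (B.label ∘ f) := by
    rintro (⟨a, b⟩ | r) (⟨a', b'⟩ | r') h <;> simp_all [f]
  have hW (x : Fin k × Fin k ⊕ Fin k) : ¬ B.QueriesIn {v | v.IsLeaf} (f x) := by
    rintro ⟨w, hw, hl⟩
    rcases x with p | r <;> simp only [f, Sum.elim_inl, Sum.elim_inr, hF, hO] at hl
    · cases hl
      exact hw
    · cases hl
  have hsize := B.card_add_card_queriesIn_le {v | v.IsLeaf} f hf hW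
  have hleaf := hB.lt_card_queriesIn_isLeaf
  rw [Nat.card_sum, Nat.card_prod, Nat.card_fin] at hsize
  nlinarith
end

section
/- Let B be a deterministic k-way branching program solving BT^h_2(k), with h ≥ 1 and k ≥ 2. Then every input I all of whose internal node functions f_i^I are quasigroups queries each of its thrifty variables, i.e., for every node i of T^h the computation path of I contains a state labeled with the thrifty i variable of I. -/
/-! ### Auxiliary development for the proof -/

/-- `j` lies in the (heap-numbered) subtree rooted at `i`. -/
def Desc (i j : ℕ) : Prop := ∃ d, j / 2 ^ d = i

lemma desc_self (i : ℕ) : Desc i i := ⟨0, by simp⟩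

lemma desc_le {i j : ℕ} (hd : Desc i j) : i ≤ j := by
  obtain ⟨d, rfl⟩ := hd; exact Nat.div_le_self _ _

lemma desc_of_desc_left {i j : ℕ} (hd : Desc (2 * i) j) : Desc i j := by
  obtain ⟨d, hd⟩ := hd
  refine ⟨d + 1, ?_⟩
  rw [pow_succ, ← Nat.div_div_eq_div_mul, hd]
  omega

lemma desc_of_desc_right {i j : ℕ} (hd : Desc (2 * i + 1) j) : Desc i j := by
  obtain ⟨d, hd⟩ := hd
  refine ⟨d + 1, ?_⟩
  rw [pow_succ, ← Nat.div_div_eq_div_mul, hd]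
  omega

lemma desc_disjoint {p j : ℕ} (hp : 1 ≤ p) (h1 : Desc (2 * p) j)
    (h2 : Desc (2 * p + 1) j) : False := by
  obtain ⟨d, hd⟩ := h1
  obtain ⟨e, he⟩ := h2
  rcases Nat.lt_trichotomy d e with hde | hde | hde
  · have key : j / 2 ^ e = (j / 2 ^ d) / 2 ^ (e - d) := by
      rw [Nat.div_div_eq_div_mul, ← pow_add]
      congr 2
      omega
    rw [hd, he] at key
    have h2le : 2 ≤ 2 ^ (e - d) := by
      calc 2 = 2 ^ 1 := rfl
        _ ≤ 2 ^ (e - d) := Nat.pow_le_pow_right (by norm_num) (by omega)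
    have : 2 * p / 2 ^ (e - d) ≤ 2 * p / 2 :=
      Nat.div_le_div_left h2le (by norm_num)
    omega
  · rw [hde] at hd; omega
  · have key : j / 2 ^ d = (j / 2 ^ e) / 2 ^ (d - e) := by
      rw [Nat.div_div_eq_div_mul, ← pow_add]
      congr 2
      omega
    rw [hd, he] at key
    have h2le : 2 ≤ 2 ^ (d - e) := by
      calc 2 = 2 ^ 1 := rfl
        _ ≤ 2 ^ (d - e) := Nat.pow_le_pow_right (by norm_num) (by omega)
    have : (2 * p + 1) / 2 ^ (d - e) ≤ (2 * p + 1) / 2 :=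
      Nat.div_le_div_left h2le (by norm_num)
    omega

/-- `valAux` only depends on the variables in the subtree. -/
lemma valAux_congr {h k : ℕ} (I J : TEInput h k) :
    ∀ m j, (∀ p, Desc j p → J.f p = I.f p ∧ J.leaf p = I.leaf p) →
      J.valAux m j = I.valAux m j := by
  intro m
  induction m with
  | zero =>
    intro j hj
    simpa [TEInput.valAux] using (hj j (desc_self j)).2
  | succ m ih =>
    intro j hj
    simp only [TEInput.valAux]
    split
    · exact (hj j (desc_self j)).2
    · rw [(hj j (desc_self j)).1,
        ih (2 * j) (fun p hp => hj p (desc_of_desc_left hp)),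
        ih (2 * j + 1) (fun p hp => hj p (desc_of_desc_right hp))]

lemma val_congr {h k : ℕ} {I J : TEInput h k} {j : ℕ}
    (hj : ∀ p, Desc j p → J.f p = I.f p ∧ J.leaf p = I.leaf p) :
    J.val j = I.val j := valAux_congr I J h j hj

/-- Extra fuel is harmless once the fuel suffices to reach the leaves. -/
lemma valAux_le {h k : ℕ} (I : TEInput h k) :
    ∀ m j, 2 ^ (h - 1) ≤ j * 2 ^ m → I.valAux (m + 1) j = I.valAux m j := by
  intro m
  induction m with
  | zero =>
    intro j hj
    simp only [pow_zero, mul_one] at hj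
    simp [TEInput.valAux, hj]
  | succ m ih =>
    intro j hj
    by_cases hle : 2 ^ (h - 1) ≤ j
    · simp [TEInput.valAux, hle]
    · have e1 : 2 ^ (h - 1) ≤ 2 * j * 2 ^ m := by
        have : j * 2 ^ (m + 1) = 2 * j * 2 ^ m := by ring
        omega
      have e2 : 2 ^ (h - 1) ≤ (2 * j + 1) * 2 ^ m := by
        have : 2 * j * 2 ^ m ≤ (2 * j + 1) * 2 ^ m :=
          Nat.mul_le_mul_right _ (by omega)
        omega
      show (if 2 ^ (h - 1) ≤ j then I.leaf j
          else I.f j (I.valAux (m + 1) (2 * j)) (I.valAux (m + 1) (2 * j + 1)))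
        = (if 2 ^ (h - 1) ≤ j then I.leaf j
          else I.f j (I.valAux m (2 * j)) (I.valAux m (2 * j + 1)))
      rw [if_neg hle, if_neg hle, ih (2 * j) e1, ih (2 * j + 1) e2]

lemma val_leaf {h k : ℕ} (I : TEInput h k) {i : ℕ} (hi : 2 ^ (h - 1) ≤ i) :
    I.val i = I.leaf i := by
  unfold TEInput.val
  cases h with
  | zero => rfl
  | succ m =>
    show (if 2 ^ (m + 1 - 1) ≤ i then I.leaf i
      else I.f i (I.valAux m (2 * i)) (I.valAux m (2 * i + 1))) = I.leaf i
    rw [if_pos hi]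

lemma val_internal {h k : ℕ} (I : TEInput h k) (hh : 1 ≤ h) {p : ℕ}
    (hp1 : 1 ≤ p) (hp2 : p < 2 ^ (h - 1)) :
    I.val p = I.f p (I.val (2 * p)) (I.val (2 * p + 1)) := by
  unfold TEInput.val
  obtain ⟨m, rfl⟩ : ∃ m, h = m + 1 := ⟨h - 1, by omega⟩
  have hm : m + 1 - 1 = m := rfl
  rw [hm] at hp2
  have c1 : 2 ^ (m + 1 - 1) ≤ 2 * p * 2 ^ m := by
    rw [hm]; calc 2 ^ m = 1 * 2 ^ m := by ring
      _ ≤ 2 * p * 2 ^ m := Nat.mul_le_mul_right _ (by omega)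
  have c2 : 2 ^ (m + 1 - 1) ≤ (2 * p + 1) * 2 ^ m := by
    rw [hm]; calc 2 ^ m = 1 * 2 ^ m := by ring
      _ ≤ (2 * p + 1) * 2 ^ m := Nat.mul_le_mul_right _ (by omega)
  conv_lhs => rw [show (TEInput.valAux I (m + 1) p) =
    (if 2 ^ (m + 1 - 1) ≤ p then I.leaf p
      else I.f p (I.valAux m (2 * p)) (I.valAux m (2 * p + 1))) from rfl]
  rw [hm, if_neg (not_le.2 hp2), ← valAux_le I m (2 * p) (by rw [← hm]; exact c1),
    ← valAux_le I m (2 * p + 1) (by rw [← hm]; exact c2)]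

/-- Key lemma: the root value is a bijective function of the value at node `i`,
uniformly over all inputs agreeing with `I` outside the subtree of `i`. -/
lemma root_bij {h k : ℕ} (hh : 1 ≤ h) (I : TEInput h k)
    (hquasi : ∀ i : ℕ, IsInternalNode h i → ∀ a : Fin k,
      Function.Bijective (I.f i a) ∧ Function.Bijective (fun x => I.f i x a)) :
    ∀ i, 1 ≤ i → i < 2 ^ h →
      ∃ π : Fin k → Fin k, Function.Bijective π ∧
        ∀ J : TEInput h k,
          (∀ p, ¬ Desc i p → J.f p = I.f p ∧ J.leaf p = I.leaf p) →
          J.val 1 = π (J.val i) := by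
  intro i
  induction i using Nat.strong_induction_on with
  | _ i ih =>
    intro hi1 hi2
    rcases eq_or_lt_of_le hi1 with h1 | h1
    · exact ⟨id, Function.bijective_id, fun J _ => by rw [← h1]; rfl⟩
    · set p := i / 2 with hpdef
      have hp1 : 1 ≤ p := by omega
      have h2pow : 2 ^ (h - 1) * 2 = 2 ^ h := by
        rw [← pow_succ]; congr 1; omega
      have hp2 : p < 2 ^ (h - 1) := by omega
      have hpint : IsInternalNode h p := ⟨hp1, hp2⟩
      obtain ⟨π₀, hπ₀, hJ₀⟩ := ih p (by omega) hp1 (by omega)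
      have hpi : ¬ Desc i p := fun hd => by have := desc_le hd; omega
      rcases (by omega : i = 2 * p ∨ i = 2 * p + 1) with hcase | hcase
      · refine ⟨π₀ ∘ (fun c => I.f p c (I.val (2 * p + 1))),
          hπ₀.comp (hquasi p hpint (I.val (2 * p + 1))).2, ?_⟩
        intro J hJ
        have hagree_p : ∀ q, ¬ Desc p q → J.f q = I.f q ∧ J.leaf q = I.leaf q := by
          intro q hq
          refine hJ q (fun hd => hq ?_)
          rw [hcase] at hd
          exact desc_of_desc_left hd
        rw [hJ₀ J hagree_p]
        have hfp : J.f p = I.f p := (hJ p hpi).1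
        have hs : J.val (2 * p + 1) = I.val (2 * p + 1) := by
          apply val_congr
          intro q hq
          refine hJ q (fun hd => ?_)
          rw [hcase] at hd
          exact desc_disjoint hp1 hd hq
        simp only [Function.comp_apply]
        congr 1
        rw [val_internal J hh hp1 hp2, hfp, hs, ← hcase]
      · refine ⟨π₀ ∘ (fun c => I.f p (I.val (2 * p)) c),
          hπ₀.comp (hquasi p hpint (I.val (2 * p))).1, ?_⟩
        intro J hJ
        have hagree_p : ∀ q, ¬ Desc p q → J.f q = I.f q ∧ J.leaf q = I.leaf q := by
          intro q hq
          refine hJ q (fun hd => hq ?_)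
          rw [hcase] at hd
          exact desc_of_desc_right hd
        rw [hJ₀ J hagree_p]
        have hfp : J.f p = I.f p := (hJ p hpi).1
        have hs : J.val (2 * p) = I.val (2 * p) := by
          apply val_congr
          intro q hq
          refine hJ q (fun hd => ?_)
          rw [hcase] at hd
          exact desc_disjoint hp1 hq hd
        simp only [Function.comp_apply]
        congr 1
        rw [val_internal J hh hp1 hp2, hfp, hs, ← hcase]

lemma run_congr {V : Type} {k : ℕ} {R : Type} (B : DetBP V k R)
    (x y : V → Fin k)
    (hxy : ∀ t v, B.label (B.run x t) = Sum.inl v → x v = y v) :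
    ∀ t, B.run x t = B.run y t := by
  intro t
  induction t with
  | zero => rfl
  | succ t iht =>
    show (B.step x)^[t + 1] B.start = (B.step y)^[t + 1] B.start
    rw [Function.iterate_succ_apply', Function.iterate_succ_apply']
    have iht' : (B.step x)^[t] B.start = (B.step y)^[t] B.start := iht
    rw [← iht']
    cases hl : B.label ((B.step x)^[t] B.start) with
    | inl v =>
      simp only [DetBP.step, hl]
      rw [hxy t v hl]
    | inr r => simp only [DetBP.step, hl]

lemma run_stable {V : Type} {k : ℕ} {R : Type} (B : DetBP V k R)
    (x : V → Fin k) {t : ℕ} {r : R}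
    (ht : B.label (B.run x t) = Sum.inr r) :
    ∀ s, B.run x (t + s) = B.run x t := by
  intro s
  induction s with
  | zero => rfl
  | succ s ihs =>
    show (B.step x)^[t + (s + 1)] B.start = B.run x t
    rw [show t + (s + 1) = (t + s) + 1 by omega, Function.iterate_succ_apply']
    have : (B.step x)^[t + s] B.start = B.run x t := ihs
    rw [this]
    simp only [DetBP.step, ht]
/-- If `B` is a deterministic `k`-way branching program solving `BT^h_2(k)`
(`h ≥ 1`, `k ≥ 2`), then every input `I` all of whose internal node functions are
quasigroups queries each of its thrifty variables: for every node `i` of `T^h`, some state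
on the computation path of `I` is labeled with the thrifty `i` variable of `I`. -/
theorem stmt_3 (h k : ℕ) (hh : 1 ≤ h) (hk : 2 ≤ k) (B : DetBP (TEVar h k) k Bool)
    (hB : B.SolvesBT) (I : TEInput h k)
    (hquasi : ∀ i : ℕ, IsInternalNode h i → ∀ a : Fin k,
      Function.Bijective (I.f i a) ∧ Function.Bijective (fun x => I.f i x a)) :
    ∀ i : ℕ, IsInternalNode h i ∨ IsLeafNode h i →
      ∃ (t : ℕ) (X : TEVar h k),
        B.label (B.run I.evalVar t) = Sum.inl X ∧ IsThriftyVarOf I i X := by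
  intro i hi
  by_contra hno
  push_neg at hno
  have hi1 : 1 ≤ i := by
    rcases hi with ⟨h1, _⟩ | ⟨h1, _⟩
    · exact h1
    · have : 1 ≤ 2 ^ (h - 1) := Nat.one_le_two_pow
      omega
  have hi2 : i < 2 ^ h := by
    rcases hi with ⟨_, h2⟩ | ⟨_, h2⟩
    · exact lt_of_lt_of_le h2 (Nat.pow_le_pow_right (by norm_num) (by omega))
    · exact h2
  obtain ⟨π, hπbij, hπ⟩ := root_bij hh I hquasi i hi1 hi2
  have hroot : I.val 1 = π (I.val i) := hπ I (fun p _ => ⟨rfl, rfl⟩)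
  obtain ⟨c, hc⟩ : ∃ c : Fin k,
      decide ((π c : Fin k).val = 0) ≠ decide ((I.val 1 : Fin k).val = 0) := by
    by_cases h0 : (I.val 1 : Fin k).val = 0
    · obtain ⟨c, hc⟩ := hπbij.2 ⟨1, by omega⟩
      exact ⟨c, by simp [hc, h0]⟩
    · obtain ⟨c, hc⟩ := hπbij.2 ⟨0, by omega⟩
      exact ⟨c, by simp [hc, h0]⟩
  classical
  obtain ⟨J, hA, hvi, hEv⟩ :
      ∃ J : TEInput h k,
        (∀ p, ¬ Desc i p → J.f p = I.f p ∧ J.leaf p = I.leaf p) ∧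
        J.val i = c ∧
        (∀ X : TEVar h k, ¬ IsThriftyVarOf I i X → I.evalVar X = J.evalVar X) := by
    rcases hi with hint | hleaf
    · -- internal node
      obtain ⟨Jf, hJf⟩ : ∃ Jf : ℕ → Fin k → Fin k → Fin k, Jf = fun j a b =>
          if j = i ∧ a = I.val (2 * i) ∧ b = I.val (2 * i + 1) then c else I.f j a b :=
        ⟨_, rfl⟩
      have hfoff : ∀ j, j ≠ i → Jf j = I.f j := by
        intro j hji
        funext a b
        simp only [hJf]
        rw [if_neg (fun hcon => hji hcon.1)]
      refine ⟨⟨Jf, I.leaf⟩, ?_, ?_, ?_⟩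
      · intro p hp
        exact ⟨hfoff p (fun hpi => hp (by rw [hpi]; exact desc_self i)), rfl⟩
      · rw [val_internal _ hh hint.1 hint.2]
        have hv1 : (⟨Jf, I.leaf⟩ : TEInput h k).val (2 * i) = I.val (2 * i) :=
          val_congr (fun q hq =>
            ⟨hfoff q (fun hqi => by subst hqi; have := desc_le hq; omega), rfl⟩)
        have hv2 : (⟨Jf, I.leaf⟩ : TEInput h k).val (2 * i + 1) = I.val (2 * i + 1) :=
          val_congr (fun q hq =>
            ⟨hfoff q (fun hqi => by subst hqi; have := desc_le hq; omega), rfl⟩)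
        show Jf i _ _ = c
        rw [hv1, hv2]
        simp [hJf]
      · intro X hX
        cases X with
        | internal j hj a b =>
          show I.f j a b = Jf j a b
          simp only [hJf]
          rw [if_neg]
          rintro ⟨rfl, h2, h3⟩
          exact hX ⟨rfl, h2, h3⟩
        | leaf j hj => rfl
    · -- leaf node
      obtain ⟨Jl, hJl⟩ : ∃ Jl : ℕ → Fin k,
          Jl = fun j => if j = i then c else I.leaf j := ⟨_, rfl⟩
      have hloff : ∀ j, j ≠ i → Jl j = I.leaf j := by
        intro j hji
        simp only [hJl]
        rw [if_neg hji]
      refine ⟨⟨I.f, Jl⟩, ?_, ?_, ?_⟩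
      · intro p hp
        exact ⟨rfl, hloff p (fun hpi => hp (by rw [hpi]; exact desc_self i))⟩
      · rw [val_leaf _ hleaf.1]
        show Jl i = c
        simp [hJl]
      · intro X hX
        cases X with
        | internal j hj a b => rfl
        | leaf j hj =>
          show I.leaf j = Jl j
          simp only [hJl]
          rw [if_neg (show ¬ j = i from fun hji => hX hji)]
  have hrun : ∀ t, B.run I.evalVar t = B.run J.evalVar t :=
    run_congr B _ _ (fun t X hl => hEv X (hno t X hl))
  obtain ⟨t1, ht1⟩ := hB I
  obtain ⟨t2, ht2⟩ := hB J
  have e1 : B.run I.evalVar (t1 + t2) = B.run I.evalVar t1 := run_stable B _ ht1 t2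
  have e2 : B.run J.evalVar (t2 + t1) = B.run J.evalVar t2 := run_stable B _ ht2 t1
  have key : (Sum.inr (decide ((I.val 1 : Fin k).val = 0)) : TEVar h k ⊕ Bool)
      = Sum.inr (decide ((J.val 1 : Fin k).val = 0)) := by
    rw [← ht1, ← ht2, ← e1, ← e2, Nat.add_comm t2 t1, hrun]
  have hJ1 : J.val 1 = π (J.val i) := hπ J hA
  rw [hJ1, hvi] at key
  have : decide ((I.val 1 : Fin k).val = 0) = decide ((π c : Fin k).val = 0) :=
    Sum.inr.inj key
  exact hc this.symm
end

section
/- Let B be a deterministic k-way branching program of depth at most 2^h solving BT^h_2(k), with h ≥ 1 and k ≥ 2. Then every input I that queries each node exactly once (i.e., for every node i of T^h, the computation path of I contains exactly one state labeled with an i variable, and that state occurs exactly once on the path) is thrifty: every variable queried along the computation path of I is a thrifty variable of I. -/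
/-! ### Auxiliary lemmas -/

namespace Stmt5Aux

/-- A value of `Fin k` different from `v` (and with flipped "is zero" status). -/
def flip2 {k : ℕ} (hk : 2 ≤ k) (v : Fin k) : Fin k :=
  if v.val = 0 then ⟨1, by omega⟩ else ⟨0, by omega⟩

lemma flip2_ne {k : ℕ} (hk : 2 ≤ k) (v : Fin k) : flip2 hk v ≠ v := by
  unfold flip2
  split_ifs with hv <;>
    · intro e
      have := congrArg Fin.val e
      simp at this
      omega

lemma flip2_zero_iff {k : ℕ} (hk : 2 ≤ k) (v : Fin k) :
    ((flip2 hk v).val = 0) ↔ ¬ (v.val = 0) := by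
  unfold flip2
  split_ifs with hv <;> simp [hv]

lemma valAux_succ {h k : ℕ} (I : TEInput h k) :
    ∀ (m i : ℕ), 2 ^ (h - 1) ≤ i * 2 ^ m → I.valAux (m + 1) i = I.valAux m i := by
  intro m
  induction m with
  | zero =>
    intro i hle
    simp only [pow_zero, mul_one] at hle
    show (if 2 ^ (h - 1) ≤ i then I.leaf i else _) = I.leaf i
    rw [if_pos hle]
  | succ m ih =>
    intro i hle
    show (if 2 ^ (h - 1) ≤ i then I.leaf i
        else I.f i (I.valAux (m + 1) (2 * i)) (I.valAux (m + 1) (2 * i + 1)))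
      = (if 2 ^ (h - 1) ≤ i then I.leaf i
        else I.f i (I.valAux m (2 * i)) (I.valAux m (2 * i + 1)))
    split_ifs with hi
    · rfl
    · have h1 : 2 ^ (h - 1) ≤ 2 * i * 2 ^ m := by
        have : 2 * i * 2 ^ m = i * 2 ^ (m + 1) := by ring
        omega
      have h2 : 2 ^ (h - 1) ≤ (2 * i + 1) * 2 ^ m := by
        have : 2 * i * 2 ^ m ≤ (2 * i + 1) * 2 ^ m := by
          apply Nat.mul_le_mul_right; omega
        omega
      rw [ih (2 * i) h1, ih (2 * i + 1) h2]

lemma val_internal {h k : ℕ} (I : TEInput h k) {i : ℕ} (h1 : 1 ≤ i) (h2 : i < 2 ^ (h - 1)) :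
    I.val i = I.f i (I.val (2 * i)) (I.val (2 * i + 1)) := by
  have hh : 1 ≤ h := by
    by_contra hc
    have : h = 0 := by omega
    subst this
    simp at h2
    omega
  obtain ⟨h', rfl⟩ : ∃ h', h = h' + 1 := ⟨h - 1, by omega⟩
  have h2' : i < 2 ^ h' := by simpa using h2
  show I.valAux (h' + 1) i = _
  have step : I.valAux (h' + 1) i
      = if 2 ^ (h' + 1 - 1) ≤ i then I.leaf i
        else I.f i (I.valAux h' (2 * i)) (I.valAux h' (2 * i + 1)) := rfl
  rw [step, if_neg (by simp only [Nat.add_sub_cancel]; omega)]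
  have c1 : I.valAux (h' + 1) (2 * i) = I.valAux h' (2 * i) := by
    apply valAux_succ
    show 2 ^ h' ≤ _
    calc 2 ^ h' ≤ 2 * 2 ^ h' := by omega
    _ ≤ 2 * i * 2 ^ h' := by
        apply Nat.mul_le_mul_right; omega
  have c2 : I.valAux (h' + 1) (2 * i + 1) = I.valAux h' (2 * i + 1) := by
    apply valAux_succ
    show 2 ^ h' ≤ _
    calc 2 ^ h' ≤ 2 * 2 ^ h' := by omega
    _ ≤ (2 * i + 1) * 2 ^ h' := by
        apply Nat.mul_le_mul_right; omega
  rw [TEInput.val, TEInput.val, c1, c2]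

/-- The value of node `n` only depends on the input at descendants of `n`. -/
lemma valAux_congr {h k : ℕ} (I₁ I₂ : TEInput h k)
    (hleaf : ∀ m, I₁.leaf m = I₂.leaf m) :
    ∀ (fuel n : ℕ), (∀ m, (∃ s, m / 2 ^ s = n) → ∀ x y, I₁.f m x y = I₂.f m x y) →
      I₁.valAux fuel n = I₂.valAux fuel n := by
  intro fuel
  induction fuel with
  | zero => intro n _; exact hleaf n
  | succ fuel ih =>
    intro n hf
    show (if 2 ^ (h - 1) ≤ n then I₁.leaf n
        else I₁.f n (I₁.valAux fuel (2 * n)) (I₁.valAux fuel (2 * n + 1)))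
      = (if 2 ^ (h - 1) ≤ n then I₂.leaf n
        else I₂.f n (I₂.valAux fuel (2 * n)) (I₂.valAux fuel (2 * n + 1)))
    split_ifs with hn
    · exact hleaf n
    · have hdesc : ∀ c : ℕ, c / 2 = n →
          ∀ m, (∃ s, m / 2 ^ s = c) → ∀ x y, I₁.f m x y = I₂.f m x y := by
        rintro c hc m ⟨s, hs⟩ x y
        apply hf m
        refine ⟨s + 1, ?_⟩
        rw [pow_succ, ← Nat.div_div_eq_div_mul, hs, hc]
      rw [ih (2 * n) (hdesc (2 * n) (by omega)),
        ih (2 * n + 1) (hdesc (2 * n + 1) (by omega))]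
      exact hf n ⟨0, by simp⟩ _ _

lemma val_congr {h k : ℕ} (I₁ I₂ : TEInput h k)
    (hleaf : ∀ m, I₁.leaf m = I₂.leaf m) (n : ℕ)
    (hf : ∀ m, (∃ s, m / 2 ^ s = n) → ∀ x y, I₁.f m x y = I₂.f m x y) :
    I₁.val n = I₂.val n :=
  valAux_congr I₁ I₂ hleaf h n hf

lemma run_succ {V : Type} {k : ℕ} {R : Type} (B : DetBP V k R) (x : V → Fin k) (t : ℕ) :
    B.run x (t + 1) = B.step x (B.run x t) :=
  Function.iterate_succ_apply' (B.step x) t B.start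

lemma run_congr {V : Type} {k : ℕ} {R : Type} (B : DetBP V k R) (x y : V → Fin k)
    (hagree : ∀ t X, B.label (B.run x t) = Sum.inl X → y X = x X) :
    ∀ t, B.run y t = B.run x t := by
  intro t
  induction t with
  | zero => rfl
  | succ t ih =>
    rw [run_succ, run_succ, ih]
    unfold DetBP.step
    cases hl : B.label (B.run x t) with
    | inl v => simp only [hl, hagree t v hl]
    | inr r => simp only [hl]

lemma run_stable {V : Type} {k : ℕ} {R : Type} (B : DetBP V k R) (x : V → Fin k)
    {t : ℕ} {r : R} (hr : B.label (B.run x t) = Sum.inr r) :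
    ∀ d, B.run x (t + d) = B.run x t := by
  intro d
  induction d with
  | zero => rfl
  | succ d ih =>
    rw [show t + (d + 1) = (t + d) + 1 by omega, run_succ, ih]
    unfold DetBP.step
    rw [hr]

lemma output_unique {V : Type} {k : ℕ} {R : Type} (B : DetBP V k R) (x : V → Fin k)
    {t₁ t₂ : ℕ} {r₁ r₂ : R} (h₁ : B.label (B.run x t₁) = Sum.inr r₁)
    (h₂ : B.label (B.run x t₂) = Sum.inr r₂) : r₁ = r₂ := by
  rcases le_total t₁ t₂ with hle | hle
  · obtain ⟨d, rfl⟩ := Nat.exists_eq_add_of_le hle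
    rw [run_stable B x h₁ d, h₁] at h₂
    exact (Sum.inr.injEq _ _).mp h₂.symm ▸ rfl
  · obtain ⟨d, rfl⟩ := Nat.exists_eq_add_of_le hle
    rw [run_stable B x h₂ d, h₂] at h₁
    exact ((Sum.inr.injEq _ _).mp h₁).symm

end Stmt5Aux
namespace Stmt5Aux

/-- Key lemma: if all queries to internal nodes below index `i` are thrifty, then no input
`I'` agreeing with `I` on all queried variables can change the value of any internal node
`j ≤ i` (to its flip), since we could propagate the change up to the root and fool `B`. -/
lemma climb {h k : ℕ} (hk : 2 ≤ k) (B : DetBP (TEVar h k) k Bool) (hB : B.SolvesBT)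
    (I : TEInput h k) (i : ℕ)
    (Hanc : ∀ (m : ℕ) (hm : IsInternalNode h m), m < i → ∀ (t : ℕ) (a b : Fin k),
      B.label (B.run I.evalVar t) = Sum.inl (TEVar.internal m hm a b) →
      a = I.val (2 * m) ∧ b = I.val (2 * m + 1)) :
    ∀ j : ℕ, 1 ≤ j → j < 2 ^ (h - 1) → j ≤ i →
      ∀ I' : TEInput h k,
        (∀ m, I'.leaf m = I.leaf m) →
        (∀ (t : ℕ) (X : TEVar h k), B.label (B.run I.evalVar t) = Sum.inl X →
          I'.evalVar X = I.evalVar X) →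
        I'.val j = flip2 hk (I.val j) → False := by
  intro j
  induction j using Nat.strong_induction_on with
  | _ j IH =>
  intro hj1 hj2 hji I' hleaf hA hflip
  rcases eq_or_lt_of_le hj1 with hroot | hj2'
  · -- j = 1 : the root value changed, but the run is unchanged, contradicting correctness
    have hrun : ∀ t, B.run I'.evalVar t = B.run I.evalVar t :=
      run_congr B I.evalVar I'.evalVar hA
    obtain ⟨t₁, h₁⟩ := hB I
    obtain ⟨t₂, h₂⟩ := hB I'
    rw [hrun] at h₂
    have hdec := output_unique B I.evalVar h₁ h₂
    rw [decide_eq_decide] at hdec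
    have : I'.val 1 = flip2 hk (I.val 1) := by rw [← hroot] at hflip; exact hflip
    rw [this, flip2_zero_iff] at hdec
    tauto
  · -- j ≥ 2 : push the change to the parent p = j / 2
    have hj2'' : 2 ≤ j := hj2'
    set p := j / 2 with hp
    have hp1 : 1 ≤ p := by omega
    have hpj : p < j := by omega
    have hpi : p < i := by omega
    have hp2 : p < 2 ^ (h - 1) := by omega
    have hjp : j = 2 * p ∨ j = 2 * p + 1 := by omega
    have hcne : I'.val j ≠ I.val j := by rw [hflip]; exact flip2_ne hk _
    set I'' : TEInput h k :=
      ⟨fun m x y => if m = p ∧ x = I'.val (2 * p) ∧ y = I'.val (2 * p + 1)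
          then flip2 hk (I.val p) else I'.f m x y, I'.leaf⟩ with hI''
    have hfI'' : ∀ m x y, I''.f m x y
        = if m = p ∧ x = I'.val (2 * p) ∧ y = I'.val (2 * p + 1)
          then flip2 hk (I.val p) else I'.f m x y := fun _ _ _ => rfl
    have hleaf'' : ∀ m, I''.leaf m = I.leaf m := hleaf
    -- agreement on queried variables
    have hA'' : ∀ (t : ℕ) (X : TEVar h k), B.label (B.run I.evalVar t) = Sum.inl X →
        I''.evalVar X = I.evalVar X := by
      intro t X hX
      cases X with
      | leaf m hm => exact hleaf m
      | internal m hm x y =>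
        show I''.f m x y = I.f m x y
        rw [hfI'']
        by_cases hc : m = p ∧ x = I'.val (2 * p) ∧ y = I'.val (2 * p + 1)
        · exfalso
          obtain ⟨rfl, hx, hy⟩ := hc
          obtain ⟨hx', hy'⟩ := Hanc p hm hpi t x y hX
          rcases hjp with hj | hj
          · rw [← hj] at hx hx'
            exact hcne (hx ▸ hx' ▸ rfl)
          · rw [← hj] at hy hy'
            exact hcne (hy ▸ hy' ▸ rfl)
        · rw [if_neg hc]
          exact hA t _ hX
    -- the value of p flips
    have hvchild : ∀ c : ℕ, 2 * p ≤ c → I''.val c = I'.val c := by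
      intro c hc
      refine val_congr I'' I' (fun m => rfl) c ?_
      rintro m ⟨s, hs⟩ x y
      rw [hfI'']
      rw [if_neg]
      rintro ⟨rfl, -, -⟩
      have hle := Nat.div_le_self p (2 ^ s)
      rw [hs] at hle
      omega
    have hflip'' : I''.val p = flip2 hk (I.val p) := by
      rw [val_internal I'' hp1 hp2, hvchild (2 * p) (by omega),
        hvchild (2 * p + 1) (by omega), hfI'', if_pos ⟨rfl, rfl, rfl⟩]
    exact IH p hpj hp1 hp2 (by omega) I'' hleaf'' hA'' hflip''

end Stmt5Aux

/-- If `B` is a deterministic `k`-way branching program of depth at most `2^h`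
solving `BT^h_2(k)` (`h ≥ 1`, `k ≥ 2`), then every input `I` that queries each node exactly
once (for every node `i` of `T^h` there is exactly one time at which the computation path
of `I` is at a state labeled with an `i` variable) is thrifty: every variable queried along
the computation path of `I` is a thrifty variable of `I`. -/
theorem stmt_5 (h k : ℕ) (hh : 1 ≤ h) (hk : 2 ≤ k) (B : DetBP (TEVar h k) k Bool)
    (hB : B.SolvesBT) (hdepth : B.DepthLE (2 ^ h)) (I : TEInput h k)
    (honce : ∀ i : ℕ, IsInternalNode h i ∨ IsLeafNode h i →
      ∃! t : ℕ, ∃ X : TEVar h k,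
        B.label (B.run I.evalVar t) = Sum.inl X ∧ X.node = i) :
    ∀ (t : ℕ) (X : TEVar h k),
      B.label (B.run I.evalVar t) = Sum.inl X → IsThriftyVarOf I X.node X := by
  suffices H : ∀ (n t : ℕ) (X : TEVar h k),
      B.label (B.run I.evalVar t) = Sum.inl X → X.node = n → IsThriftyVarOf I X.node X by
    intro t X hX
    exact H X.node t X hX rfl
  intro n
  induction n using Nat.strong_induction_on with
  | _ n IH =>
  intro t X hX hnode
  cases X with
  | leaf m hm => exact rfl
  | internal m hm a b =>
    have hnm : m = n := hnode
    subst hnm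
    have hm1 : 1 ≤ m := hm.1
    have hm2 : m < 2 ^ (h - 1) := hm.2
    show m = m ∧ a = I.val (2 * m) ∧ b = I.val (2 * m + 1)
    refine ⟨rfl, ?_⟩
    by_contra hcon
    -- thriftiness of all queries at smaller-indexed internal nodes, from the induction
    have Hanc : ∀ (m' : ℕ) (hm' : IsInternalNode h m'), m' < m →
        ∀ (t' : ℕ) (a' b' : Fin k),
        B.label (B.run I.evalVar t') = Sum.inl (TEVar.internal m' hm' a' b') →
        a' = I.val (2 * m') ∧ b' = I.val (2 * m' + 1) := by
      intro m' hm' hlt t' a' b' hq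
      have := IH m' hlt t' (TEVar.internal m' hm' a' b') hq rfl
      exact this.2
    -- uniqueness of the query time at node m
    obtain ⟨t₀, ht₀, huniq⟩ := honce m (Or.inl hm)
    have htt : t = t₀ := huniq t ⟨TEVar.internal m hm a b, hX, rfl⟩
    -- the modified input J: change the thrifty variable of m (which is unqueried)
    set J : TEInput h k :=
      ⟨fun m' x y => if m' = m ∧ x = I.val (2 * m) ∧ y = I.val (2 * m + 1)
          then Stmt5Aux.flip2 hk (I.val m) else I.f m' x y, I.leaf⟩ with hJ
    have hfJ : ∀ m' x y, J.f m' x y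
        = if m' = m ∧ x = I.val (2 * m) ∧ y = I.val (2 * m + 1)
          then Stmt5Aux.flip2 hk (I.val m) else I.f m' x y := fun _ _ _ => rfl
    have hAJ : ∀ (t' : ℕ) (X' : TEVar h k), B.label (B.run I.evalVar t') = Sum.inl X' →
        J.evalVar X' = I.evalVar X' := by
      intro t' X' hX'
      cases X' with
      | leaf m' hm' => rfl
      | internal m' hm' x y =>
        show J.f m' x y = I.f m' x y
        rw [hfJ, if_neg]
        rintro ⟨rfl, hx, hy⟩
        have htt' : t' = t₀ := huniq t' ⟨TEVar.internal m' hm' x y, hX', rfl⟩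
        rw [htt', ← htt] at hX'
        have heq := Sum.inl_injective (hX'.symm.trans hX)
        injection heq with e2 e3 e4
        subst e3
        subst e4
        exact hcon ⟨hx, hy⟩
    have hflipJ : J.val m = Stmt5Aux.flip2 hk (I.val m) := by
      have hch : ∀ c, 2 * m ≤ c → J.val c = I.val c := by
        intro c hc
        refine Stmt5Aux.val_congr J I (fun _ => rfl) c ?_
        rintro q ⟨s, hs⟩ x y
        rw [hfJ, if_neg]
        rintro ⟨he, -, -⟩
        have hle := Nat.div_le_self q (2 ^ s)
        rw [hs] at hle
        omega
      rw [Stmt5Aux.val_internal J hm1 hm2, hch (2 * m) (by omega),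
        hch (2 * m + 1) (by omega), hfJ, if_pos ⟨rfl, rfl, rfl⟩]
    exact Stmt5Aux.climb hk B hB I m Hanc m hm1 hm2 le_rfl J (fun _ => rfl) hAJ hflipJ
end

section
/- For all d ≥ 2, h ≥ 1 and c ≥ 1, the black pebbling cost of the DAG G'_{d,h} (the goal being to place a pebble on the new root, starting and finishing from the empty configuration) is exactly c·((d−1)(h−1) + 1). -/
/-! The balanced `d`-ary tree `T_d^h` with `h` levels: a node at depth `l` (the root having
depth `0`, the leaves depth `h-1`; a node at depth `l` has level `h - l`, so leaves have
level 1 and the tree root level `h`) is indexed by an element of `Fin (d^l)`; the children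
of node `(l, j)` are the nodes `(l+1, d*j + r)` for `r < d` (child number `r` among its
siblings, in left-to-right order). -/

/-- The nodes of the balanced `d`-ary tree with `h` levels. -/
abbrev TreeNode (d h : ℕ) := Σ l : Fin h, Fin (d ^ (l : ℕ))

/-- The inorder-traversal strict order on `T_d^h` (first the leftmost subtree, then the
node, then the remaining subtrees in order): node `(l, j)` gets the key
`(j*d + 1)/d^(l+1)`, and `u < v` iff `key u < key v` (stated here with the denominators
cleared). -/
def inorderLt (d h : ℕ) (u v : TreeNode d h) : Prop :=
  ((u.2 : ℕ) * d + 1) * d ^ (v.1 : ℕ) < ((v.2 : ℕ) * d + 1) * d ^ (u.1 : ℕ)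

/-- The copy nodes of `G_{d,h}`: `c` copies of each node of `T_d^h` (with the copy index
in `Fin c`, `0`-based). -/
abbrev CopyNode (d h c : ℕ) := TreeNode d h × Fin c

/-- The order `<` on copy nodes: `u < u'` iff the underlying tree nodes satisfy
`T(u) < T(u')` in inorder, or they are copies of the same tree node and the copy index of
`u` is smaller. -/
def copyLt (d h c : ℕ) (u v : CopyNode d h c) : Prop :=
  inorderLt d h u.1 v.1 ∨ (u.1 = v.1 ∧ (u.2 : ℕ) < (v.2 : ℕ))

/-- The nodes of `G_{d,h}` (and of `G'_{d,h}`): the copy nodes together with one new root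
(`none`), which has the `c` copies of the tree root as its children. -/
abbrev GNode (d h c : ℕ) := Option (CopyNode d h c)

/-- The child relation of `G'_{d,h}` (edges directed from children to parents).  In
`G_{d,h}`, the children of `v[i]` are all `c` copies of each of the `d` tree children of
`v`, and the children of the new root are the `c` copies of the tree root.  `G'_{d,h}` is
obtained by deleting, for each internal tree node `v` and each copy `v[i]`
(`i ∈ Fin c`, `0`-based), the edges from the `i` smallest and the `c - 1 - i` largest
children of `v[i]` with respect to `<` (so `v[i]` keeps exactly `c(d-1) + 1` children):
the children of `v[i]` in `G_{d,h}`, listed in increasing `<` order, are `u_r[m]` at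
position `r*c + m` where `u_r` is tree child number `r` of `v`, and `v[i]` keeps exactly
the children at positions `i, …, (d-1)c + i`. -/
def gChild' (d h c : ℕ) : GNode d h c → GNode d h c → Prop
  | some u, some v =>
      (u.1.1 : ℕ) = (v.1.1 : ℕ) + 1 ∧ (u.1.2 : ℕ) / d = (v.1.2 : ℕ) ∧
      (v.2 : ℕ) ≤ ((u.1.2 : ℕ) % d) * c + (u.2 : ℕ) ∧
      ((u.1.2 : ℕ) % d) * c + (u.2 : ℕ) ≤ (d - 1) * c + (v.2 : ℕ)
  | some u, none => (u.1.1 : ℕ) = 0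
  | none, _ => False

/-! Black pebbling on a DAG whose edges are directed from children to parents
(`child u v` means `u` is a child of `v`; a leaf is a node with no children). -/

/-- A legal black pebbling move from configuration `C` to `C'`:
place a pebble on a leaf; remove a pebble from any node; or, if all children of a node
carry pebbles, place a pebble on it or slide onto it a pebble from one of its children. -/
def BlackStep {V : Type} (child : V → V → Prop) (C C' : Set V) : Prop :=
  (∃ v, (∀ u, ¬ child u v) ∧ C' = insert v C) ∨
  (∃ v, C' = C \ {v}) ∨
  (∃ v, (∀ u, child u v → u ∈ C) ∧
     (C' = insert v C ∨ ∃ u, child u v ∧ u ∈ C ∧ C' = insert v (C \ {u})))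

/-- A black pebbling of the DAG `(V, child)`: a finite sequence of configurations starting
from the empty configuration, each obtained from the previous by a legal move. -/
structure BlackPebbling (V : Type) (child : V → V → Prop) where
  T : ℕ
  cfg : ℕ → Set V
  start : cfg 0 = ∅
  step : ∀ t < T, BlackStep child (cfg t) (cfg (t + 1))

/-- The pebbling places a pebble on `u` at some point. -/
def BlackPebbling.Pebbles {V : Type} {child : V → V → Prop}
    (P : BlackPebbling V child) (u : V) : Prop :=
  ∃ t ≤ P.T, u ∈ P.cfg t

/-- The pebbling never has more than `p` pebbles simultaneously on the graph. -/
def BlackPebbling.CostLE {V : Type} {child : V → V → Prop}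
    (P : BlackPebbling V child) (p : ℕ) : Prop :=
  ∀ t ≤ P.T, (P.cfg t).ncard ≤ p

/-! Upper bound: pebble the children of a node one after the other, keeping the `c` pebbles on the
copies of each finished child, then slide the pebbles from the copies of the first child onto the
copies of the node in increasing order, which works because `w[i]` only needs the copies of the
first child from `i` on. This costs `(d - 1) c` more than a child, and `c` at the leaves.

Lower bound, by induction on the height `ν`: if the copies `S` of `w` all carry pebbles at time
`t₀` while the subtree of `w` held fewer than `|S|` pebbles at an earlier time, then in between the
subtree holds `c ((d - 1) ν + 1) - (c - |S|)` pebbles. Numbering the copies of the children of `w`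
by the position `r c + m`, the copies of `w` still to be placed need an interval of them, at least
`c (d - 1)` more than their own number. A child subtree holding fewer of them than needed bulges
later by induction; at the last bulge no child falls short, and summing over the children gives
the bound. -/

namespace BlackStep

variable {V : Type} {child : V → V → Prop} {C C' : Set V}

theorem children_mem (hs : BlackStep child C C') {x : V} (hx' : x ∈ C') (hx : x ∉ C) :
    ∀ u, child u x → u ∈ C := by
  rcases hs with ⟨v, hv, rfl⟩ | ⟨v, rfl⟩ | ⟨v, hv, rfl | ⟨u, -, -, rfl⟩⟩
  · obtain rfl := (Set.mem_insert_iff.1 hx').resolve_right hx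
    exact fun u hu => (hv u hu).elim
  · exact (hx hx'.1).elim
  · obtain rfl := (Set.mem_insert_iff.1 hx').resolve_right hx
    exact hv
  · obtain rfl := (Set.mem_insert_iff.1 hx').resolve_right fun h => hx h.1
    exact hv

/-- Removing a pebble that `C` does not carry is the one move that does not survive adding the
pebbles of `E`. -/
theorem union_left_or_eq {E : Set V} (hE : Disjoint E C) (hs : BlackStep child C C') :
    BlackStep child (E ∪ C) (E ∪ C') ∨ C' = C := by
  rcases hs with ⟨v, hv, rfl⟩ | ⟨v, rfl⟩ | ⟨v, hv, rfl | ⟨u, hu, huC, rfl⟩⟩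
  · exact Or.inl (Or.inl ⟨v, hv, Set.union_insert ..⟩)
  · by_cases hvC : v ∈ C
    · refine Or.inl (Or.inr (Or.inl ⟨v, ?_⟩))
      rw [Set.union_sdiff_distrib, Set.sdiff_singleton_eq_self (hE.notMem_of_mem_right hvC)]
    · exact Or.inr (Set.sdiff_singleton_eq_self hvC)
  · exact Or.inl (Or.inr (Or.inr ⟨v, fun u hu => Or.inr (hv u hu), Or.inl (Set.union_insert ..)⟩))
  · refine Or.inl (Or.inr (Or.inr ⟨v, fun u hu => Or.inr (hv u hu),
      Or.inr ⟨u, hu, Or.inr huC, ?_⟩⟩))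
    rw [Set.union_insert, Set.union_sdiff_distrib,
      Set.sdiff_singleton_eq_self (hE.notMem_of_mem_right huC)]

end BlackStep

def BlackRun {V : Type} (child : V → V → Prop) (Inv : Set V → Prop) : Set V → Set V → Prop :=
  Relation.ReflTransGen fun C C' => Inv C ∧ BlackStep child C C' ∧ Inv C'

namespace BlackRun

variable {V : Type} {child : V → V → Prop} {Inv Inv' : Set V → Prop} {A B C : Set V}

theorem refl (A : Set V) : BlackRun child Inv A A := Relation.ReflTransGen.refl

theorem single (hA : Inv A) (hs : BlackStep child A B) (hB : Inv B) : BlackRun child Inv A B :=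
  Relation.ReflTransGen.single ⟨hA, hs, hB⟩

theorem trans (h₁ : BlackRun child Inv A B) (h₂ : BlackRun child Inv B C) :
    BlackRun child Inv A C :=
  Relation.ReflTransGen.trans h₁ h₂

theorem tail (h : BlackRun child Inv A B) (hB : Inv B) (hs : BlackStep child B C) (hC : Inv C) :
    BlackRun child Inv A C :=
  h.trans (single hB hs hC)

theorem inv_right (hA : Inv A) (h : BlackRun child Inv A B) : Inv B := by
  induction h with
  | refl => exact hA
  | tail _ hs => exact hs.2.2

theorem mono (hInv : ∀ C, Inv C → Inv' C) (h : BlackRun child Inv A B) :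
    BlackRun child Inv' A B :=
  Relation.ReflTransGen.mono (fun _ _ ⟨h₁, hs, h₂⟩ => ⟨hInv _ h₁, hs, hInv _ h₂⟩) _ _ h

theorem union_left {E : Set V} (hE : ∀ C, Inv C → Disjoint E C) (h : BlackRun child Inv A B) :
    BlackRun child (fun D => ∃ C, Inv C ∧ D = E ∪ C) (E ∪ A) (E ∪ B) := by
  refine Relation.ReflTransGen.lift' (E ∪ ·) (fun C C' ⟨hC, hs, hC'⟩ => ?_) _ _ h
  rcases hs.union_left_or_eq (hE C hC) with hs' | rfl
  · exact single ⟨C, hC, rfl⟩ hs' ⟨C', hC', rfl⟩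
  · exact Relation.ReflTransGen.refl

theorem sdiff (C : Set V) (X : Finset V) : BlackRun child (· ⊆ C) C (C \ X) := by
  classical
  induction X using Finset.induction with
  | empty => simpa using refl C
  | insert a X _ ih =>
    rw [Finset.coe_insert, Set.insert_eq, Set.union_comm, ← Set.sdiff_sdiff]
    exact ih.tail Set.sdiff_subset (Or.inr (Or.inl ⟨a, rfl⟩))
      (Set.sdiff_subset.trans Set.sdiff_subset)

theorem union_of_children_mem (C : Set V) (X : Finset V) (hX : ∀ x ∈ X, ∀ u, child u x → u ∈ C) :
    BlackRun child (fun D => C ⊆ D ∧ D ⊆ C ∪ X) C (C ∪ X) := by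
  classical
  induction X using Finset.induction with
  | empty => simpa using refl C
  | insert a X _ ih =>
    rw [Finset.coe_insert, Set.union_insert]
    have ih : BlackRun child (fun D => C ⊆ D ∧ D ⊆ insert a (C ∪ X)) C (C ∪ X) :=
      (ih fun x hx => hX x (Finset.mem_insert_of_mem hx)).mono
        fun D hD => ⟨hD.1, hD.2.trans (Set.subset_insert ..)⟩
    exact ih.tail ⟨Set.subset_union_left, Set.subset_insert ..⟩
      (Or.inr (Or.inr ⟨a, fun u hu => Or.inl (hX a (by simp) u hu), Or.inl rfl⟩))
      ⟨Set.subset_union_left.trans (Set.subset_insert ..), subset_rfl⟩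

theorem slide [Finite V] {n : ℕ} {u v : Fin n → V} (C : Set V) (hu : ∀ j, u j ∈ C)
    (hv : ∀ j, v j ∉ C) (hu_inj : Function.Injective u) (hchild : ∀ i, child (u i) (v i))
    (hchildren : ∀ i y, child y (v i) → y ∈ C ∧ ∀ j < i, y ≠ u j) :
    BlackRun child (fun D => D ⊆ C ∪ Set.range v ∧ D.ncard ≤ C.ncard) C
      (C \ Set.range u ∪ Set.range v) := by
  set state : ℕ → Set V := fun k =>
    C \ u '' {j | (j : ℕ) < k} ∪ v '' {j | (j : ℕ) < k} with hstate
  have hInv : ∀ k, state k ⊆ C ∪ Set.range v := fun k =>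
    Set.union_subset_union Set.sdiff_subset (Set.image_subset_range ..)
  have key : ∀ k ≤ n, (state k).ncard ≤ C.ncard ∧ BlackRun child
      (fun D => D ⊆ C ∪ Set.range v ∧ D.ncard ≤ C.ncard) C (state k) := by
    intro k
    induction k with
    | zero => simpa [hstate] using refl C
    | succ k ih =>
      intro hk
      obtain ⟨hcard, hrun⟩ := ih (by omega)
      set i : Fin n := ⟨k, hk⟩
      have hui : u i ∈ state k := Or.inl ⟨hu i, fun ⟨j, hj, hji⟩ => by
        have := hu_inj hji; subst this; exact lt_irrefl k hj⟩
      have hnext : state (k + 1) = insert (v i) (state k \ {u i}) := by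
        ext y
        simp only [hstate, Set.mem_union, Set.mem_sdiff, Set.mem_image, Set.mem_insert_iff,
          Set.mem_singleton_iff, Set.mem_ofPred_eq]
        have hlt : ∀ j : Fin n, (j : ℕ) < k + 1 ↔ (j : ℕ) < k ∨ j = i := fun j => by
          rw [Fin.ext_iff, show (i : ℕ) = k from rfl]; omega
        have hvu : ∀ j j', v j ≠ u j' := fun j j' h => hv j (h ▸ hu j')
        simp only [hlt]
        grind
      have hcard' : (state (k + 1)).ncard ≤ C.ncard := by
        rw [hnext]
        exact (Set.ncard_insert_le _ _).trans
          (by rw [Set.ncard_sdiff_singleton_add_one hui]; exact hcard)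
      refine ⟨hcard', hrun.tail ⟨hInv k, hcard⟩ (Or.inr (Or.inr ⟨v i, fun y hy => ?_,
        Or.inr ⟨u i, hchild i, hui, hnext⟩⟩)) ⟨hInv _, hcard'⟩⟩
      obtain ⟨hyC, hyu⟩ := hchildren i y hy
      exact Or.inl ⟨hyC, fun ⟨j, hj, hjy⟩ => hyu j hj hjy.symm⟩
  simpa [hstate, Set.image_univ] using (key n le_rfl).2

end BlackRun

theorem Relation.ReflTransGen.exists_seq_extend {α : Type*} {r : α → α → Prop} {n : ℕ}
    {f : ℕ → α} {b : α} (hf : ∀ i < n, r (f i) (f (i + 1))) (h : Relation.ReflTransGen r (f n) b) :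
    ∃ (m : ℕ) (g : ℕ → α), n ≤ m ∧ (∀ i ≤ n, g i = f i) ∧ g m = b ∧
      ∀ i < m, r (g i) (g (i + 1)) := by
  induction h with
  | refl => exact ⟨n, f, le_rfl, fun _ _ => rfl, rfl, hf⟩
  | @tail b c _ hbc ih =>
    obtain ⟨m, g, hnm, hgf, hgm, hg⟩ := ih
    refine ⟨m + 1, fun i => if i ≤ m then g i else c, by omega, fun i hi => ?_, by simp, ?_⟩
    · simp only [show i ≤ m by omega, if_true, hgf i hi]
    · intro i hi
      rcases Nat.lt_or_ge i m with him | him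
      · simpa [him.le, Nat.succ_le_of_lt him] using hg i him
      · obtain rfl : i = m := by omega
        simpa [hgm] using hbc

theorem BlackPebbling.exists_of_blackRun {V : Type} {child : V → V → Prop} {p : ℕ} {B : Set V}
    {x : V} (h₁ : BlackRun child (·.ncard ≤ p) ∅ B) (h₂ : BlackRun child (·.ncard ≤ p) B ∅)
    (hx : x ∈ B) :
    ∃ P : BlackPebbling V child, P.Pebbles x ∧ P.cfg P.T = ∅ ∧ P.CostLE p := by
  obtain ⟨m, g, -, hg0, hgm, hg⟩ :=
    Relation.ReflTransGen.exists_seq_extend (n := 0) (f := fun _ => ∅) (by simp) h₁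
  obtain ⟨T, cfg, hmT, hcfg, hT, hstep⟩ := Relation.ReflTransGen.exists_seq_extend hg (hgm ▸ h₂)
  refine ⟨⟨T, cfg, (hcfg 0 (Nat.zero_le _)).trans (hg0 0 le_rfl), fun t ht => (hstep t ht).2.1⟩,
    ⟨m, hmT, by simpa [hcfg m le_rfl, hgm] using hx⟩, hT, fun t ht => ?_⟩
  change t ≤ T at ht
  rcases Nat.lt_or_ge t T with htT | htT
  · exact (hstep t htT).1
  · obtain rfl : t = T := by omega
    rcases Nat.eq_zero_or_pos t with rfl | ht0
    · simp [hT]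
    · simpa [Nat.sub_add_cancel ht0] using (hstep (t - 1) (by omega)).2.2

namespace BlackPebbling

variable {V : Type} {child : V → V → Prop} (P : BlackPebbling V child) {x : V} {t : ℕ}

noncomputable def since (x : V) (t : ℕ) : ℕ :=
  sInf {p | ∀ σ, p ≤ σ → σ ≤ t → x ∈ P.cfg σ}

variable {P}

theorem since_le (hx : x ∈ P.cfg t) : P.since x t ≤ t :=
  Nat.sInf_le fun _ h₁ h₂ => le_antisymm h₂ h₁ ▸ hx

theorem mem_cfg_of_since_le (hx : x ∈ P.cfg t) {σ : ℕ} (h₁ : P.since x t ≤ σ) (h₂ : σ ≤ t) :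
    x ∈ P.cfg σ :=
  Nat.sInf_mem (s := {p | ∀ σ, p ≤ σ → σ ≤ t → x ∈ P.cfg σ})
    ⟨t, fun _ h₁ h₂ => le_antisymm h₂ h₁ ▸ hx⟩ σ h₁ h₂

/-- The start configuration is empty, so the pebble on `x` was placed by the move into time
`P.since x t`. -/
theorem children_mem_cfg_pred_since (hx : x ∈ P.cfg t) (ht : t ≤ P.T) :
    ∀ u, child u x → u ∈ P.cfg (P.since x t - 1) := by
  have hpos : 0 < P.since x t := Nat.pos_of_ne_zero fun h0 => by
    simpa [P.start] using mem_cfg_of_since_le hx h0.le (Nat.zero_le t)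
  have hnot : x ∉ P.cfg (P.since x t - 1) := fun hmem => by
    have : P.since x t ≤ P.since x t - 1 := Nat.sInf_le fun σ h₁ h₂ => by
      rcases h₁.eq_or_lt with rfl | h₁
      · exact hmem
      · exact mem_cfg_of_since_le hx (by omega) h₂
    omega
  have hstep := P.step (P.since x t - 1) (by have := since_le hx; omega)
  rw [Nat.sub_add_cancel hpos] at hstep
  exact hstep.children_mem (mem_cfg_of_since_le hx le_rfl (since_le hx)) hnot

end BlackPebbling

theorem Nat.exists_last_of_forall_exists_later {Q R : ℕ → Prop} {s n : ℕ}
    (h₀ : ∃ τ, s < τ ∧ τ ≤ n ∧ Q τ)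
    (hlater : ∀ τ, s < τ → τ ≤ n → Q τ → ¬ R τ → ∃ τ', τ < τ' ∧ τ' ≤ n ∧ Q τ') :
    ∃ τ, s < τ ∧ τ ≤ n ∧ Q τ ∧ R τ := by
  classical
  obtain ⟨τ₀, hsτ₀, hτ₀n, hQτ₀⟩ := h₀
  set τ := Nat.findGreatest (fun τ => s < τ ∧ Q τ) n
  obtain ⟨hsτ, hQτ⟩ : s < τ ∧ Q τ :=
    Nat.findGreatest_spec (P := fun τ => s < τ ∧ Q τ) hτ₀n ⟨hsτ₀, hQτ₀⟩
  refine ⟨τ, hsτ, Nat.findGreatest_le n, hQτ, by_contra fun hR => ?_⟩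
  obtain ⟨τ', hττ', hτ'n, hQτ'⟩ := hlater τ hsτ (Nat.findGreatest_le n) hQτ hR
  exact absurd (Nat.le_findGreatest hτ'n ⟨hsτ.trans hττ', hQτ'⟩) (not_le.2 hττ')

namespace TreeNode

variable {d h : ℕ}

theorem ext_val {a b : TreeNode d h} (h₁ : (a.1 : ℕ) = b.1) (h₂ : (a.2 : ℕ) = b.2) : a = b := by
  obtain ⟨⟨l, hl⟩, ⟨j, hj⟩⟩ := a
  obtain ⟨⟨l', hl'⟩, ⟨j', hj'⟩⟩ := b
  simp only at h₁ h₂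
  subst h₁ h₂
  rfl

def child (w : TreeNode d h) (hw : (w.1 : ℕ) + 1 < h) (r : Fin d) : TreeNode d h :=
  ⟨⟨w.1 + 1, hw⟩, ⟨d * w.2 + r, calc
    d * w.2 + r < d * (w.2 + 1) := by have := r.isLt; rw [mul_add_one]; omega
    _ ≤ d * d ^ (w.1 : ℕ) := Nat.mul_le_mul_left d w.2.isLt
    _ = d ^ ((w.1 : ℕ) + 1) := (pow_succ' d _).symm⟩⟩

@[simp] theorem child_fst (w : TreeNode d h) (hw) (r : Fin d) :
    ((w.child hw r).1 : ℕ) = w.1 + 1 := rfl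

@[simp] theorem child_snd (w : TreeNode d h) (hw) (r : Fin d) :
    ((w.child hw r).2 : ℕ) = d * w.2 + r := rfl

def InSubtree (w x : TreeNode d h) : Prop :=
  (w.1 : ℕ) ≤ x.1 ∧ (x.2 : ℕ) / d ^ ((x.1 : ℕ) - w.1) = w.2

theorem inSubtree_refl (w : TreeNode d h) : InSubtree w w := ⟨le_rfl, by simp⟩

theorem InSubtree.of_child (hd : 0 < d) {w x : TreeNode d h} {hw} {r : Fin d}
    (hx : InSubtree (w.child hw r) x) : InSubtree w x := by
  obtain ⟨h₁, h₂⟩ := hx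
  simp only [child_fst, child_snd] at h₁ h₂
  refine ⟨by omega, ?_⟩
  rw [show (x.1 : ℕ) - w.1 = (x.1 - (w.1 + 1)) + 1 by omega, pow_succ, ← Nat.div_div_eq_div_mul,
    h₂, Nat.mul_add_div hd, Nat.div_eq_of_lt r.isLt, add_zero]

theorem not_inSubtree_child (w : TreeNode d h) (hw) (r : Fin d) :
    ¬ InSubtree (w.child hw r) w := fun hx => by
  have := hx.1
  simp only [child_fst] at this
  omega

theorem eq_of_inSubtree_child {w x : TreeNode d h} {hw} {r r' : Fin d}
    (hx : InSubtree (w.child hw r) x) (hx' : InSubtree (w.child hw r') x) : r = r' := by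
  have := hx.2.symm.trans hx'.2
  simp only [child_fst, child_snd] at this
  exact Fin.ext (by omega)

def root (hh : 0 < h) : TreeNode d h := ⟨⟨0, hh⟩, ⟨0, by simp⟩⟩

theorem eq_root_of_fst_eq_zero (hh : 0 < h) {x : TreeNode d h} (hx : (x.1 : ℕ) = 0) :
    x = root hh :=
  ext_val hx (by have := x.2.isLt; simp only [hx, pow_zero] at this; simp [root]; omega)

end TreeNode

/-- In `G'_{d,h}`, copy `m` of child `r` of `w` is a child of `w[i]` iff
`InWindow d c i (r * c + m)`. -/
def InWindow (d c i q : ℕ) : Prop := i ≤ q ∧ q ≤ (d - 1) * c + i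

open Classical in
noncomputable def neededCopies {d c : ℕ} (F : Finset (Fin c)) (r : Fin d) : Finset (Fin c) :=
  Finset.univ.filter fun m => ∃ i ∈ F, InWindow d c i (r * c + m)

section Windows

variable {d c : ℕ} {F F' : Finset (Fin c)}

theorem mem_neededCopies {r : Fin d} {m : Fin c} :
    m ∈ neededCopies F r ↔ ∃ i ∈ F, InWindow d c i (r * c + m) := by
  simp [neededCopies]

theorem neededCopies_mono (hF : F ⊆ F') (r : Fin d) : neededCopies F r ⊆ neededCopies F' r :=
  fun _ hm => let ⟨i, hi, hw⟩ := mem_neededCopies.1 hm; mem_neededCopies.2 ⟨i, hF hi, hw⟩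

theorem subset_neededCopies_zero (hd : 0 < d) : F ⊆ neededCopies F ⟨0, hd⟩ := fun i hi =>
  mem_neededCopies.2 ⟨i, hi, by simp [InWindow]⟩

/-- The witness is the leftmost copy in `F` for every child but the last, the rightmost for the
last. -/
theorem exists_forall_window (hd : 2 ≤ d) (hF : F.Nonempty) (r : Fin d) :
    ∃ i ∈ F, ∀ m ∈ neededCopies F r, InWindow d c i (r * c + m) := by
  have hc : c ≤ (d - 1) * c := Nat.le_mul_of_pos_left c (by omega)
  by_cases hr : (r : ℕ) = d - 1
  · refine ⟨F.max' hF, F.max'_mem hF, fun m hm => ?_⟩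
    obtain ⟨i, hi, hwin⟩ := mem_neededCopies.1 hm
    have := F.le_max' i hi
    have := (F.max' hF).isLt
    rw [Fin.le_def] at *
    rw [hr] at hwin ⊢
    constructor <;> unfold InWindow at hwin <;> omega
  · refine ⟨F.min' hF, F.min'_mem hF, fun m hm => ?_⟩
    obtain ⟨i, hi, hwin⟩ := mem_neededCopies.1 hm
    have := F.min'_le i hi
    have : (r + 1) * c ≤ (d - 1) * c := Nat.mul_le_mul_right c (by omega)
    rw [Fin.le_def] at *
    constructor <;> unfold InWindow at hwin <;> nlinarith [m.isLt]

/-- Reading copy `m` of child `r` as the position `r * c + m`, the windows of the copies in `F`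
cover the whole interval from the window of the leftmost to that of the rightmost. -/
theorem le_sum_card_neededCopies (hd : 2 ≤ d) (hF : F.Nonempty) :
    c * (d - 1) + F.card ≤ ∑ r : Fin d, (neededCopies F r).card := by
  classical
  set lo := F.min' hF
  set hi := F.max' hF
  have hc : c ≤ (d - 1) * c := Nat.le_mul_of_pos_left c (by omega)
  have hdc : (d - 1) * c + c = d * c := by
    rw [← Nat.succ_mul, Nat.succ_eq_add_one, Nat.sub_add_cancel (by omega)]
  have hlohi : (lo : ℕ) ≤ hi := F.min'_le_max' hF
  have hcovered : Finset.Icc (lo : ℕ) (hi + (d - 1) * c) ⊆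
      (Finset.range (d * c)).filter fun q => ∃ i ∈ F, InWindow d c i q := by
    intro q hq
    rw [Finset.mem_Icc] at hq
    have := hi.isLt
    refine Finset.mem_filter.2 ⟨Finset.mem_range.2 (by omega), ?_⟩
    by_cases hq' : q ≤ lo + (d - 1) * c
    · exact ⟨lo, F.min'_mem hF, hq.1, by omega⟩
    · exact ⟨hi, F.max'_mem hF, by omega, by omega⟩
  have hFcard : F.card ≤ hi + 1 - lo := by
    rw [← Fin.card_Icc]
    exact Finset.card_le_card fun i hi' => Finset.mem_Icc.2 ⟨F.min'_le i hi', F.le_max' i hi'⟩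
  have hsum : ∑ r : Fin d, (neededCopies F r).card =
      ((Finset.range (d * c)).filter fun q => ∃ i ∈ F, InWindow d c i q).card := by
    simp only [Finset.card_filter, ← Fin.sum_univ_eq_sum_range, neededCopies]
    rw [← Fintype.sum_prod_type']
    refine Fintype.sum_equiv finProdFinEquiv _ _ fun x => ?_
    simp only [finProdFinEquiv, Equiv.coe_fn_mk, mul_comm, add_comm]
    congr
  have := Finset.card_le_card hcovered
  rw [Nat.card_Icc] at this
  rw [hsum, mul_comm]
  omega

end Windows

/-- The price of pebbling the copies of a node at height `ν`, the leaves having height `0`. -/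
def treeCost (d c ν : ℕ) : ℕ := c * ((d - 1) * ν + 1)

theorem le_treeCost (d c ν : ℕ) : c ≤ treeCost d c ν := Nat.le_mul_of_pos_right c (by omega)

namespace GNode

open TreeNode

section Sets

variable {d h : ℕ} (c : ℕ)

def copies (w : TreeNode d h) : Set (GNode d h c) := Set.range fun m => some (w, m)

def subtree (w : TreeNode d h) : Set (GNode d h c) :=
  {y | ∃ x m, y = some (x, m) ∧ w.InSubtree x}

variable {c} {w : TreeNode d h}

theorem copy_mem_copies (w : TreeNode d h) (m : Fin c) : some (w, m) ∈ copies c w := ⟨m, rfl⟩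

theorem copy_ne_copy_child (hw) (m : Fin c) (r : Fin d) (m' : Fin c) :
    (some (w, m) : GNode d h c) ≠ some (w.child hw r, m') := fun he => by
  simpa using congrArg (fun y : GNode d h c => y.map fun x => (x.1.1 : ℕ)) he

theorem copies_subset_subtree : copies c w ⊆ subtree c w := by
  rintro _ ⟨m, rfl⟩
  exact ⟨w, m, rfl, inSubtree_refl w⟩

theorem ncard_image_copies (S : Set (Fin c)) :
    ((fun m => (some (w, m) : GNode d h c)) '' S).ncard = S.ncard :=
  Set.ncard_image_of_injective S fun _ _ h => by simpa using h

theorem ncard_copies : (copies c w).ncard = c := by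
  rw [copies, ← Set.image_univ, ncard_image_copies, Set.ncard_univ, Nat.card_eq_fintype_card,
    Fintype.card_fin]

theorem subtree_child_subset (hd : 0 < d) (hw) (r : Fin d) :
    subtree c (w.child hw r) ⊆ subtree c w := by
  rintro _ ⟨x, m, rfl, hx⟩
  exact ⟨x, m, rfl, hx.of_child hd⟩

theorem disjoint_copies_subtree_child (hw) (r : Fin d) :
    Disjoint (copies c w) (subtree c (w.child hw r)) := by
  rw [Set.disjoint_left]
  rintro _ ⟨m, rfl⟩ ⟨x, m', hxm, hx⟩
  obtain ⟨rfl, -⟩ := Prod.ext_iff.1 (Option.some_injective _ hxm)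
  exact not_inSubtree_child w hw r hx

theorem pairwise_disjoint_subtree_child (hw) :
    Pairwise (Function.onFun Disjoint fun r : Fin d => subtree c (w.child hw r)) := by
  intro r r' hrr'
  rw [Function.onFun, Set.disjoint_left]
  rintro _ ⟨x, m, rfl, hx⟩ ⟨x', m', hxm, hx'⟩
  obtain ⟨rfl, -⟩ := Prod.ext_iff.1 (Option.some_injective _ hxm)
  exact hrr' (eq_of_inSubtree_child hx hx')

theorem card_le_ncard_inter_subtree {C : Set (GNode d h c)} {S : Finset (Fin c)}
    (hS : ∀ m ∈ S, some (w, m) ∈ C) : S.card ≤ (C ∩ subtree c w).ncard := by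
  rw [← Set.ncard_coe_finset, ← ncard_image_copies (w := w)]
  refine Set.ncard_le_ncard ?_
  rintro _ ⟨m, hm, rfl⟩
  exact ⟨hS m hm, copies_subset_subtree (copy_mem_copies w m)⟩

theorem sum_ncard_inter_subtree_child_add_card_le (hd : 0 < d) (hw) {C : Set (GNode d h c)}
    {S : Finset (Fin c)} (hS : ∀ m ∈ S, some (w, m) ∈ C) :
    ∑ r, (C ∩ subtree c (w.child hw r)).ncard + S.card ≤ (C ∩ subtree c w).ncard := by
  set A := (fun m => (some (w, m) : GNode d h c)) '' S
  set B := ⋃ r, C ∩ subtree c (w.child hw r)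
  have hB : B.ncard = ∑ r, (C ∩ subtree c (w.child hw r)).ncard := by
    rw [Set.ncard_iUnion_of_finite (fun _ => Set.toFinite _), finsum_eq_sum_of_fintype]
    exact fun r r' hrr' => (pairwise_disjoint_subtree_child hw hrr').mono
      Set.inter_subset_right Set.inter_subset_right
  have hAB : Disjoint B A := by
    rw [Set.disjoint_left]
    rintro _ hy ⟨m, -, rfl⟩
    obtain ⟨r, -, hr⟩ := Set.mem_iUnion.1 hy
    exact Set.disjoint_left.1 (disjoint_copies_subtree_child hw r) (copy_mem_copies w m) hr
  have hsub : B ∪ A ⊆ C ∩ subtree c w := Set.union_subset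
    (Set.iUnion_subset fun r => Set.inter_subset_inter_right C (subtree_child_subset hd hw r))
    (by rintro _ ⟨m, hm, rfl⟩; exact ⟨hS m hm, copies_subset_subtree (copy_mem_copies w m)⟩)
  calc ∑ r, (C ∩ subtree c (w.child hw r)).ncard + S.card = (B ∪ A).ncard := by
        rw [Set.ncard_union_eq hAB, hB, ncard_image_copies, Set.ncard_coe_finset]
    _ ≤ _ := Set.ncard_le_ncard hsub

end Sets

variable {d h c : ℕ}

theorem gChild'_some_iff (hd : 0 < d) {w : TreeNode d h} (hw) (i : Fin c) (y : GNode d h c) :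
    gChild' d h c y (some (w, i)) ↔
      ∃ r m, y = some (w.child hw r, m) ∧ InWindow d c i (r * c + m) := by
  constructor
  · rcases y with _ | ⟨x, m⟩
    · exact False.elim
    rintro ⟨h₁, h₂, h₃⟩
    refine ⟨⟨x.2 % d, Nat.mod_lt _ hd⟩, m, ?_, h₃⟩
    congr
    exact ext_val h₁ (by simp only [child_snd]; rw [← h₂]; exact (Nat.div_add_mod _ d).symm)
  · rintro ⟨r, m, rfl, hwin⟩
    have hr : (d * w.2 + r) % d = r := by rw [Nat.mul_add_mod, Nat.mod_eq_of_lt r.isLt]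
    refine ⟨rfl, ?_, ?_⟩
    · simp only [child_snd, Nat.mul_add_div hd, Nat.div_eq_of_lt r.isLt, add_zero]
    · simp only [child_snd, hr]
      exact hwin

theorem gChild'_none_iff (hh : 0 < h) (y : GNode d h c) :
    gChild' d h c y none ↔ y ∈ copies c (root hh) := by
  constructor
  · rcases y with _ | ⟨x, m⟩
    · exact False.elim
    intro (hx : (x.1 : ℕ) = 0)
    rw [eq_root_of_fst_eq_zero hh hx]
    exact copy_mem_copies _ m
  · rintro ⟨m, rfl⟩
    rfl

theorem not_gChild'_of_leaf {w : TreeNode d h} (hw : h ≤ (w.1 : ℕ) + 1) (i : Fin c)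
    (y : GNode d h c) : ¬ gChild' d h c y (some (w, i)) := by
  rcases y with _ | ⟨x, m⟩
  · exact id
  · rintro ⟨(h₁ : (x.1 : ℕ) = w.1 + 1), -⟩
    have := x.1.isLt
    omega

theorem blackRun_copies_of_leaf {w : TreeNode d h} (hw : h ≤ (w.1 : ℕ) + 1) :
    BlackRun (gChild' d h c) (fun D => D ⊆ subtree c w ∧ D.ncard ≤ c) ∅ (copies c w) := by
  have hcopies : ((Finset.univ.image fun m => some (w, m) : Finset (GNode d h c)) :
      Set (GNode d h c)) = copies c w := by
    simp [copies]
  have hrun := BlackRun.union_of_children_mem (child := gChild' d h c) ∅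
    (Finset.univ.image fun m => some (w, m)) (by
      simp only [Finset.mem_image, Finset.mem_univ, true_and]
      rintro _ ⟨m, rfl⟩ u hu
      exact (not_gChild'_of_leaf hw m u hu).elim)
  rw [Set.empty_union, hcopies] at hrun
  exact hrun.mono fun D hD =>
    ⟨hD.2.trans copies_subset_subtree, (Set.ncard_le_ncard hD.2).trans ncard_copies.le⟩

def childCopies (c : ℕ) (w : TreeNode d h) (hw : (w.1 : ℕ) + 1 < h) (k : ℕ) : Set (GNode d h c) :=
  {y | ∃ r : Fin d, (r : ℕ) < k ∧ y ∈ copies c (w.child hw r)}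

section Internal

variable {w : TreeNode d h} (hw : (w.1 : ℕ) + 1 < h)

theorem childCopies_subset_subtree (hd : 0 < d) (k : ℕ) : childCopies c w hw k ⊆ subtree c w := by
  rintro _ ⟨r, -, hy⟩
  exact subtree_child_subset hd hw r (copies_subset_subtree hy)

theorem childCopies_succ {k : ℕ} (hk : k < d) :
    childCopies c w hw (k + 1) = childCopies c w hw k ∪ copies c (w.child hw ⟨k, hk⟩) := by
  ext y
  simp only [childCopies, Set.mem_union, Set.mem_ofPred_eq]
  constructor
  · rintro ⟨r, hr, hy⟩
    rcases Nat.lt_succ_iff_lt_or_eq.1 hr with hr | hr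
    · exact Or.inl ⟨r, hr, hy⟩
    · exact Or.inr (by rwa [show r = ⟨k, hk⟩ from Fin.ext hr] at hy)
  · rintro (⟨r, hr, hy⟩ | hy)
    · exact ⟨r, by omega, hy⟩
    · exact ⟨⟨k, hk⟩, Nat.lt_succ_self k, hy⟩

theorem ncard_childCopies_le {k : ℕ} (hk : k ≤ d) : (childCopies c w hw k).ncard ≤ k * c := by
  induction k with
  | zero => simp [childCopies]
  | succ k ih =>
    rw [childCopies_succ hw hk, add_one_mul]
    exact (Set.ncard_union_le _ _).trans (by rw [ncard_copies]; have := ih (by omega); omega)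

theorem blackRun_childCopies (hd : 0 < d) {Q : ℕ}
    (hchild : ∀ r, BlackRun (gChild' d h c) (fun D => D ⊆ subtree c (w.child hw r) ∧ D.ncard ≤ Q)
      ∅ (copies c (w.child hw r))) :
    ∀ k ≤ d, BlackRun (gChild' d h c)
      (fun D => D ⊆ subtree c w ∧ D.ncard ≤ (d - 1) * c + Q) ∅ (childCopies c w hw k) := by
  intro k
  induction k with
  | zero => simpa [childCopies] using BlackRun.refl ∅
  | succ k ih =>
    intro hk
    have hcard := ncard_childCopies_le hw (c := c) (by omega : k ≤ d)
    set r : Fin d := ⟨k, hk⟩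
    have hdisj : ∀ C, C ⊆ subtree c (w.child hw r) → Disjoint (childCopies c w hw k) C := by
      rintro C hC
      refine Set.disjoint_of_subset_right hC (Set.disjoint_left.2 ?_)
      rintro _ ⟨r', hr', hy⟩
      have hrr' : r' ≠ r := fun h => by rw [h] at hr'; exact lt_irrefl k hr'
      exact Set.disjoint_left.1 (pairwise_disjoint_subtree_child hw hrr') (copies_subset_subtree hy)
    have hlift := (hchild r).union_left fun C hC => hdisj C hC.1
    rw [Set.union_empty, ← childCopies_succ hw hk] at hlift
    refine (ih (by omega)).trans (hlift.mono ?_)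
    rintro _ ⟨C, ⟨hCsub, hCcard⟩, rfl⟩
    refine ⟨Set.union_subset (childCopies_subset_subtree hw hd k)
      (hCsub.trans (subtree_child_subset hd hw r)), ?_⟩
    have : k * c ≤ (d - 1) * c := Nat.mul_le_mul_right c (by omega)
    exact (Set.ncard_union_le _ _).trans (by omega)

theorem blackRun_slide_childCopies (hd : 0 < d) :
    BlackRun (gChild' d h c)
      (fun D => D ⊆ childCopies c w hw d ∪ copies c w ∧ D.ncard ≤ (childCopies c w hw d).ncard)
      (childCopies c w hw d) (childCopies c w hw d \ copies c (w.child hw ⟨0, hd⟩) ∪ copies c w) :=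
  BlackRun.slide (u := fun m => some (w.child hw ⟨0, hd⟩, m)) (v := fun m => some (w, m)) _
    (fun m => ⟨⟨0, hd⟩, hd, m, rfl⟩) (fun m ⟨r, _, m', he⟩ => copy_ne_copy_child hw m r m' he.symm)
    (fun m m' he => by simpa using he)
    (fun i => (gChild'_some_iff hd hw i _).2 ⟨⟨0, hd⟩, i, rfl, by simp [InWindow]⟩)
    (fun i y hy => by
      obtain ⟨r, m, rfl, hwin⟩ := (gChild'_some_iff hd hw i y).1 hy
      refine ⟨⟨r, r.isLt, m, rfl⟩, fun j hji he => ?_⟩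
      simp only [Option.some.injEq, Prod.mk.injEq] at he
      obtain ⟨hr, rfl⟩ := he
      have : (r : ℕ) = 0 := by simpa using congrArg (fun x => (x.2 : ℕ)) hr
      rw [this, zero_mul, zero_add] at hwin
      exact absurd hwin.1 (not_le.2 hji))

theorem blackRun_copies_of_childCopies (hd : 0 < d) :
    BlackRun (gChild' d h c) (fun D => D ⊆ subtree c w ∧ D.ncard ≤ d * c)
      (childCopies c w hw d) (copies c w) := by
  set C := childCopies c w hw d
  set B := C \ copies c (w.child hw ⟨0, hd⟩) ∪ copies c w
  have hCcard : C.ncard ≤ d * c := ncard_childCopies_le hw le_rfl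
  have hsub : C ∪ copies c w ⊆ subtree c w :=
    Set.union_subset (childCopies_subset_subtree hw hd d) copies_subset_subtree
  have hslide := blackRun_slide_childCopies (c := c) hw hd
  have hB := hslide.inv_right ⟨Set.subset_union_left, le_rfl⟩
  have hrem := BlackRun.sdiff (child := gChild' d h c) B (Set.toFinite C).toFinset
  have hdisj : Disjoint (copies c w) C := Set.disjoint_left.2 fun _ ⟨m, hm⟩ ⟨r, _, m', he⟩ =>
    copy_ne_copy_child hw m r m' (hm.trans he.symm)
  rw [Set.Finite.coe_toFinset, Set.union_sdiff_distrib, Set.sdiff_eq_empty.2 Set.sdiff_subset,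
    Set.empty_union, hdisj.sdiff_eq_left] at hrem
  exact (hslide.mono fun D hD => ⟨hD.1.trans hsub, hD.2.trans hCcard⟩).trans
    (hrem.mono fun D hD => ⟨hD.trans (hB.1.trans hsub),
      (Set.ncard_le_ncard hD).trans (hB.2.trans hCcard)⟩)

end Internal

theorem blackRun_copies (hd : 0 < d) (ν : ℕ) : ∀ w : TreeNode d h, h - 1 - w.1 = ν →
    BlackRun (gChild' d h c) (fun D => D ⊆ subtree c w ∧ D.ncard ≤ treeCost d c ν)
      ∅ (copies c w) := by
  induction ν with
  | zero =>
    intro w hw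
    simpa [treeCost] using blackRun_copies_of_leaf (c := c) (w := w) (by omega)
  | succ ν ih =>
    intro w hwν
    have hw : (w.1 : ℕ) + 1 < h := by omega
    have hcost : (d - 1) * c + treeCost d c ν = treeCost d c (ν + 1) := by
      simp only [treeCost]; ring
    rw [← hcost]
    refine (blackRun_childCopies hw hd (fun r => ih _ ?_) d le_rfl).trans
      ((blackRun_copies_of_childCopies hw hd).mono fun D hD => ⟨hD.1, hD.2.trans ?_⟩)
    · simp only [child_fst]; omega
    · have := le_treeCost d c ν
      calc d * c = (d - 1) * c + c := by
            rw [← Nat.succ_mul, Nat.succ_eq_add_one, Nat.sub_add_cancel hd]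
        _ ≤ _ := by omega

theorem exists_blackPebbling_costLE (hd : 0 < d) (hh : 0 < h) (hc : 0 < c) :
    ∃ P : BlackPebbling (GNode d h c) (gChild' d h c),
      P.Pebbles none ∧ P.cfg P.T = ∅ ∧ P.CostLE (treeCost d c (h - 1)) := by
  set x₀ : GNode d h c := some (root hh, ⟨0, hc⟩)
  set B := insert none (copies c (root hh) \ {x₀})
  have hB : B.ncard ≤ treeCost d c (h - 1) := calc
    B.ncard ≤ (copies c (root hh) \ {x₀}).ncard + 1 := Set.ncard_insert_le _ _
    _ = c := by rw [Set.ncard_sdiff_singleton_add_one (copy_mem_copies _ _), ncard_copies]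
    _ ≤ _ := le_treeCost d c _
  have hstep : BlackStep (gChild' d h c) (copies c (root hh)) B :=
    Or.inr (Or.inr ⟨none, fun u hu => (gChild'_none_iff hh u).1 hu,
      Or.inr ⟨x₀, rfl, copy_mem_copies _ _, rfl⟩⟩)
  have hrun := (blackRun_copies (c := c) hd (h - 1) (root hh) rfl).mono fun D hD => hD.2
  have hrem := BlackRun.sdiff (child := gChild' d h c) B Finset.univ
  rw [Finset.coe_univ, Set.sdiff_univ] at hrem
  exact BlackPebbling.exists_of_blackRun
    (hrun.tail (ncard_copies.trans_le (le_treeCost d c _)) hstep hB)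
    (hrem.mono fun D hD => (Set.ncard_le_ncard hD).trans hB) (Set.mem_insert _ _)

section Counting

variable {w : TreeNode d h} {C : Set (GNode d h c)} {F G : Finset (Fin c)}

theorem ncard_inter_subtree_child_zero_lt (hd : 0 < d) (hw) (hG : ∀ i ∈ G, some (w, i) ∈ C)
    (h : (C ∩ subtree c w).ncard < G.card + F.card) :
    (C ∩ subtree c (w.child hw ⟨0, hd⟩)).ncard < (neededCopies F ⟨0, hd⟩).card := by
  have hsum := sum_ncard_inter_subtree_child_add_card_le hd hw hG
  have h₀ := Finset.single_le_sum (f := fun r => (C ∩ subtree c (w.child hw r)).ncard)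
    (fun _ _ => Nat.zero_le _) (Finset.mem_univ ⟨0, hd⟩)
  have hF := Finset.card_le_card (subset_neededCopies_zero (F := F) hd)
  omega

theorem treeCost_succ_add_card_le (hd : 2 ≤ d) (hw) {ν : ℕ} (hF : F.Nonempty)
    (hG : ∀ i ∈ G, some (w, i) ∈ C)
    (hfloor : ∀ r, (neededCopies F r).card ≤ (C ∩ subtree c (w.child hw r)).ncard) {r₀ : Fin d}
    (hbulge : treeCost d c ν + (neededCopies F r₀).card ≤
      (C ∩ subtree c (w.child hw r₀)).ncard + c) :
    treeCost d c (ν + 1) + G.card + F.card ≤ (C ∩ subtree c w).ncard + c := by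
  have hsum := sum_ncard_inter_subtree_child_add_card_le (by omega) hw hG
  have hneeded := le_sum_card_neededCopies hd hF
  have hrest := Finset.sum_le_sum (s := Finset.univ.erase r₀) fun r _ => hfloor r
  rw [← Finset.add_sum_erase _ _ (Finset.mem_univ r₀)] at hsum hneeded
  have hcost : treeCost d c (ν + 1) = treeCost d c ν + c * (d - 1) := by
    simp only [treeCost]; ring
  omega

end Counting

/-- The invariant of the lower bound: the subtree of `w` must hold `treeCost d c ν - (c - |S|)`
pebbles at some time in `(s, t₀]`, written without truncated subtraction. -/
def DemandsPebbles (P : BlackPebbling (GNode d h c) (gChild' d h c)) (w : TreeNode d h)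
    (ν : ℕ) : Prop :=
  ∀ (S : Finset (Fin c)) (s t₀ : ℕ), s ≤ t₀ → t₀ ≤ P.T → (∀ m ∈ S, some (w, m) ∈ P.cfg t₀) →
    (P.cfg s ∩ subtree c w).ncard < S.card →
    ∃ τ, s < τ ∧ τ ≤ t₀ ∧ treeCost d c ν + S.card ≤ (P.cfg τ ∩ subtree c w).ncard + c

variable {P : BlackPebbling (GNode d h c) (gChild' d h c)}

theorem demandsPebbles_zero (w : TreeNode d h) : DemandsPebbles P w 0 := by
  intro S s t₀ hst _ hS hsmall
  have hS' := card_le_ncard_inter_subtree hS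
  refine ⟨t₀, lt_of_le_of_ne hst fun h => ?_, le_rfl, by simp [treeCost]; omega⟩
  subst h
  omega

/-- The copies in `S` of `w` that at time `τ` have not yet received the pebble they carry at
time `t₀`. -/
noncomputable def pendingCopies (P : BlackPebbling (GNode d h c) (gChild' d h c))
    (w : TreeNode d h) (S : Finset (Fin c)) (t₀ τ : ℕ) : Finset (Fin c) :=
  S.filter fun i => τ < P.since (some (w, i)) t₀

section Pending

variable {w : TreeNode d h} {S : Finset (Fin c)} {t₀ : ℕ}

theorem pendingCopies_anti {τ τ' : ℕ} (hττ' : τ ≤ τ') :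
    pendingCopies P w S t₀ τ' ⊆ pendingCopies P w S t₀ τ := fun i hi => by
  simp only [pendingCopies, Finset.mem_filter] at hi ⊢
  exact ⟨hi.1, by omega⟩

theorem mem_cfg_of_mem_sdiff_pendingCopies (hS : ∀ m ∈ S, some (w, m) ∈ P.cfg t₀) {τ : ℕ}
    (hτ : τ ≤ t₀) : ∀ i ∈ S \ pendingCopies P w S t₀ τ, some (w, i) ∈ P.cfg τ := by
  intro i hi
  simp only [pendingCopies, Finset.mem_sdiff, Finset.mem_filter, not_and, not_lt] at hi
  exact BlackPebbling.mem_cfg_of_since_le (hS i hi.1) (hi.2 hi.1) hτ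

theorem card_sdiff_pendingCopies_add_card (τ : ℕ) :
    (S \ pendingCopies P w S t₀ τ).card + (pendingCopies P w S t₀ τ).card = S.card :=
  Finset.card_sdiff_add_card_eq_card (Finset.filter_subset _ _)

/-- The needed copies are all children of a single pending `w[i]` (`exists_forall_window`),
present just before `w[i]` is placed, no later than `w[j]`; the invariant of child `r` applies
up to then. -/
theorem DemandsPebbles.exists_bulge_of_deficit (hd : 2 ≤ d) {hw} {ν : ℕ} {r : Fin d}
    (hdemand : DemandsPebbles P (w.child hw r) ν) (hS : ∀ m ∈ S, some (w, m) ∈ P.cfg t₀)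
    (ht₀ : t₀ ≤ P.T) {s : ℕ} {j : Fin c} (hjmax : ∀ i ∈ pendingCopies P w S t₀ s,
      P.since (some (w, i)) t₀ ≤ P.since (some (w, j)) t₀)
    {τ : ℕ} (hsτ : s ≤ τ) (hF : (pendingCopies P w S t₀ τ).Nonempty)
    (hdeficit : (P.cfg τ ∩ subtree c (w.child hw r)).ncard <
      (neededCopies (pendingCopies P w S t₀ τ) r).card) :
    ∃ τ', τ < τ' ∧ τ' ≤ P.since (some (w, j)) t₀ - 1 ∧
      treeCost d c ν + (neededCopies (pendingCopies P w S t₀ τ) r).card ≤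
        (P.cfg τ' ∩ subtree c (w.child hw r)).ncard + c := by
  obtain ⟨i, hi, hwin⟩ := exists_forall_window hd hF r
  obtain ⟨hiS, hτi⟩ := Finset.mem_filter.1 hi
  have hij := hjmax i (pendingCopies_anti hsτ hi)
  have hit₀ := BlackPebbling.since_le (hS i hiS)
  obtain ⟨τ', hττ', hτ'i, hbulge⟩ := hdemand _ τ (P.since (some (w, i)) t₀ - 1) (by omega)
    (by omega) (fun m hm => BlackPebbling.children_mem_cfg_pred_since (hS i hiS) ht₀ _
      ((gChild'_some_iff (by omega) hw i (some (w.child hw r, m))).2 ⟨r, m, rfl, hwin m hm⟩))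
    hdeficit
  exact ⟨τ', hττ', by omega, hbulge⟩

end Pending

/-- Some copy `w[j]` is placed for good only after the deficit time `s`, and until then the copies
still to be placed keep their children in demand. A deficit in a child forces a later bulge in some
child, so the last bulge before `w[j]` is placed comes with no deficit in any child, and there
`treeCost_succ_add_card_le` applies. -/
theorem demandsPebbles_of_children (hd : 2 ≤ d) {w : TreeNode d h} (hw) {ν : ℕ}
    (hchild : ∀ r, DemandsPebbles P (w.child hw r) ν) : DemandsPebbles P w (ν + 1) := by
  intro S s t₀ hst ht₀ hS hsmall
  set pending := pendingCopies P w S t₀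
  have hsplit : ∀ τ, (S \ pending τ).card + (pending τ).card = S.card :=
    card_sdiff_pendingCopies_add_card
  have hplaced : ∀ τ ≤ t₀, ∀ i ∈ S \ pending τ, some (w, i) ∈ P.cfg τ := fun _ hτ =>
    mem_cfg_of_mem_sdiff_pendingCopies hS hτ
  obtain ⟨j, hj, hjmax⟩ := Finset.exists_max_image (pending s)
      (fun i => P.since (some (w, i)) t₀) <| by
    rw [Finset.nonempty_iff_ne_empty]
    intro h0
    have h₁ := card_le_ncard_inter_subtree (hplaced s hst)
    have h₂ := hsplit s
    rw [h0, Finset.sdiff_empty] at h₁ h₂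
    omega
  obtain ⟨hjS, hjs⟩ := Finset.mem_filter.1 hj
  have hjt₀ := BlackPebbling.since_le (hS j hjS)
  set n := P.since (some (w, j)) t₀ - 1
  have hpending_ne : ∀ τ ≤ n, (pending τ).Nonempty := fun τ hτ =>
    ⟨j, Finset.mem_filter.2 ⟨hjS, by omega⟩⟩
  have hmono : ∀ {τ τ'}, τ ≤ τ' → ∀ r : Fin d,
      (neededCopies (pending τ') r).card ≤ (neededCopies (pending τ) r).card := fun hττ' r =>
    Finset.card_le_card (neededCopies_mono (pendingCopies_anti hττ') r)
  have hd' : 0 < d := by omega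
  obtain ⟨τ, hsτ, hτn, ⟨r, hbulge⟩, hfloor⟩ := Nat.exists_last_of_forall_exists_later
    (Q := fun τ => ∃ r, treeCost d c ν + (neededCopies (pending τ) r).card ≤
      (P.cfg τ ∩ subtree c (w.child hw r)).ncard + c)
    (R := fun τ => ∀ r,
      (neededCopies (pending τ) r).card ≤ (P.cfg τ ∩ subtree c (w.child hw r)).ncard)
    (s := s) (n := n)
    (by
      obtain ⟨τ', hsτ', hτ'n, hbulge⟩ := (hchild ⟨0, hd'⟩).exists_bulge_of_deficit hd hS ht₀
        hjmax le_rfl (hpending_ne s (by omega))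
        (ncard_inter_subtree_child_zero_lt hd' hw (hplaced s hst) (by rw [hsplit]; exact hsmall))
      exact ⟨τ', hsτ', hτ'n, ⟨0, hd'⟩, (Nat.add_le_add_left (hmono hsτ'.le _) _).trans hbulge⟩)
    (by
      intro τ hsτ hτn _ hR
      push Not at hR
      obtain ⟨r, hr⟩ := hR
      obtain ⟨τ', hττ', hτ'n, hbulge⟩ :=
        (hchild r).exists_bulge_of_deficit hd hS ht₀ hjmax hsτ.le (hpending_ne τ hτn) hr
      exact ⟨τ', hττ', hτ'n, r, (Nat.add_le_add_left (hmono hττ'.le _) _).trans hbulge⟩)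
  refine ⟨τ, hsτ, by omega, ?_⟩
  have := treeCost_succ_add_card_le hd hw (hpending_ne τ hτn) (hplaced τ (by omega)) hfloor hbulge
  have := hsplit τ
  omega

theorem demandsPebbles (hd : 2 ≤ d) (ν : ℕ) :
    ∀ w : TreeNode d h, h - 1 - w.1 = ν → DemandsPebbles P w ν := by
  induction ν with
  | zero => exact fun w _ => demandsPebbles_zero w
  | succ ν ih =>
    intro w hwν
    have hw : (w.1 : ℕ) + 1 < h := by omega
    exact demandsPebbles_of_children hd hw fun r => ih _ (by simp only [child_fst]; omega)

theorem exists_treeCost_le_ncard_cfg (hd : 2 ≤ d) (hh : 0 < h) (hc : 0 < c)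
    (hP : P.Pebbles none) : ∃ t ≤ P.T, treeCost d c (h - 1) ≤ (P.cfg t).ncard := by
  obtain ⟨t, ht, hnone⟩ := hP
  have hroot : ∀ m ∈ Finset.univ, some (root hh, m) ∈ P.cfg (P.since none t - 1) := fun m _ =>
    BlackPebbling.children_mem_cfg_pred_since hnone ht _
      ((gChild'_none_iff hh _).2 (copy_mem_copies _ m))
  obtain ⟨τ, -, hτ, hbound⟩ := demandsPebbles hd (h - 1) (root hh) rfl Finset.univ 0 _
    (Nat.zero_le _) (by have := BlackPebbling.since_le hnone; omega) hroot
    (by simpa [P.start] using hc)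
  refine ⟨τ, by have := BlackPebbling.since_le hnone; omega, ?_⟩
  have := Set.ncard_le_ncard (Set.inter_subset_left (s := P.cfg τ) (t := subtree c (root hh)))
  simp only [Finset.card_univ, Fintype.card_fin] at hbound
  omega

end GNode

/-- For all `d ≥ 2`, `h ≥ 1` and `c ≥ 1`, the black pebbling cost of
`G'_{d,h}` — the goal being to place a pebble on the new root, starting and finishing
from the empty configuration — is exactly `c((d-1)(h-1) + 1)`: there is such a pebbling
using at most `c((d-1)(h-1)+1)` pebbles, and every such pebbling has a configuration with
at least `c((d-1)(h-1)+1)` pebbles. -/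
theorem stmt_13 (d h c : ℕ) (hd : 2 ≤ d) (hh : 1 ≤ h) (hc : 1 ≤ c) :
    (∃ P : BlackPebbling (GNode d h c) (gChild' d h c),
      P.Pebbles none ∧ P.cfg P.T = ∅ ∧ P.CostLE (c * ((d - 1) * (h - 1) + 1))) ∧
    (∀ P : BlackPebbling (GNode d h c) (gChild' d h c),
      P.Pebbles none → P.cfg P.T = ∅ →
      ∃ t ≤ P.T, c * ((d - 1) * (h - 1) + 1) ≤ (P.cfg t).ncard) :=
  ⟨GNode.exists_blackPebbling_costLE (by omega) hh hc,
    fun _ hP _ => GNode.exists_treeCost_le_ncard_cfg hd hh hc hP⟩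
end
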